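/- arXiv:1811.08137 — 7 statements merged into one kernel-verified Lean document; each statement's English description precedes it below -/
import Mathlib

section
/- Martingale Hardy–Littlewood–Sobolev inequality: for all real numbers 1 < p < q < ∞, setting α := 1/p − 1/q, there is a constant C = C(m,p,q) such that every real-valued martingale F adapted to (ℱ_n) with sup_n ‖F_n‖_{L_p(P)} < ∞ satisfies, for every N ≥ 1, ‖Σ_{n=1}^N m^{−α·n}·f_n‖_{L_q(P)} ≤ C·sup_n ‖F_n‖_{L_p(P)}. -/
open MeasureTheory ENNReal NNReal

noncomputable section

namespace MartingaleModel

/-- The cylinder in `ℕ → Fin m` determined by a word `w` of length `n`. -/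
def cyl (m n : ℕ) (w : Fin n → Fin m) : Set (ℕ → Fin m) :=
  {x | ∀ i : Fin n, x (i : ℕ) = w i}

/-- `F` is adapted: `F n` depends only on the first `n` coordinates. -/
def AdaptedFun (m : ℕ) {E : Type*} (F : ℕ → (ℕ → Fin m) → E) : Prop :=
  ∀ n (x y : ℕ → Fin m), (∀ i < n, x i = y i) → F n x = F n y

/-- `F` is a martingale for the uniform `m`-adic filtration:
adapted, and each value is the average of the values on the children. -/
def IsMartingaleFun (m : ℕ) {E : Type*} [AddCommGroup E] [Module ℝ E]
    (F : ℕ → (ℕ → Fin m) → E) : Prop :=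
  AdaptedFun m F ∧
    ∀ n (x : ℕ → Fin m), (m : ℝ) • F n x = ∑ j : Fin m, F (n + 1) (Function.update x n j)

/-- Partial sums of the Riesz potential `I_α` applied to the martingale `F`,
`(I_α F)_N = ∑_{n=1}^N m^{-α n} f_n` where `f_n = F_n - F_{n-1}`. -/
def rieszSum (m : ℕ) {E : Type*} [AddCommGroup E] [Module ℝ E] (α : ℝ)
    (F : ℕ → (ℕ → Fin m) → E) (N : ℕ) (x : ℕ → Fin m) : E :=
  ∑ n ∈ Finset.Icc 1 N, ((m : ℝ) ^ (-(α * n)) : ℝ) • (F n x - F (n - 1) x)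

end MartingaleModel

open MartingaleModel

/-!
Hedberg's argument. An atom of `ℱ_n` has measure `m^(-n)`, so `|F_n| ≤ m^(n/p) ‖F‖_p`
pointwise, while `|F_n| ≤ F^*`, Doob's maximal function. Splitting `∑ m^(-αn) f_n` at the index
where `m^(n/p) ‖F‖_p` overtakes `F^*` leaves two geometric sums, whence
`|I_α F| ≲ ‖F‖_p^(1-p/q) (F^*)^(p/q)` pointwise; raising this to the power `q` and applying
Doob's inequality `‖F^*‖_p ≲ ‖F‖_p` gives the claim. Everything depends on the first `N` letters
only, so integrals are finite sums over words, and Doob's weak-type inequality follows by induction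
on the time from the martingale identity `m F_k = ∑_j F_(k+1)(x with letter k set to j)`.
-/

namespace MartingaleModel

open Finset

section Hedberg

lemma sum_pow_le_mul_of_pow_le {x c : ℝ} (hx : 1 < x) (hc : 0 ≤ c) {s : Finset ℕ}
    (hs : ∀ n ∈ s, x ^ n ≤ c) : ∑ n ∈ s, x ^ n ≤ c * (x / (x - 1)) := by
  have hx1 : 0 < x - 1 := by linarith
  rcases s.eq_empty_or_nonempty with rfl | hne
  · rw [sum_empty]; positivity
  set k := s.max' hne
  calc ∑ n ∈ s, x ^ n ≤ ∑ n ∈ range (k + 1), x ^ n :=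
        sum_le_sum_of_subset_of_nonneg (fun n hn => mem_range_succ_iff.2 (s.le_max' n hn))
          fun _ _ _ => by positivity
    _ = (x ^ (k + 1) - 1) / (x - 1) := geom_sum_eq hx.ne' _
    _ ≤ x ^ (k + 1) / (x - 1) := by gcongr; linarith
    _ = x ^ k * (x / (x - 1)) := by ring
    _ ≤ c * (x / (x - 1)) := by gcongr; exact hs k (s.max'_mem hne)

lemma sum_pow_le_div_of_pow_le {x c : ℝ} (hx0 : 0 ≤ x) (hx1 : x < 1) (hc : 0 ≤ c)
    {s : Finset ℕ} (hs : ∀ n ∈ s, x ^ n ≤ c) : ∑ n ∈ s, x ^ n ≤ c / (1 - x) := by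
  have hx1' : 0 < 1 - x := by linarith
  rcases s.eq_empty_or_nonempty with rfl | hne
  · rw [sum_empty]; positivity
  set k := s.min' hne
  calc ∑ n ∈ s, x ^ n ≤ ∑ n ∈ Ico k (s.max' hne + 1), x ^ n :=
        sum_le_sum_of_subset_of_nonneg
          (fun n hn => mem_Ico.2 ⟨s.min'_le n hn, Nat.lt_succ_of_le (s.le_max' n hn)⟩)
          fun _ _ _ => by positivity
    _ ≤ x ^ k / (1 - x) := geom_sum_Ico_le_of_lt_one hx0 hx1
    _ ≤ c / (1 - x) := by gcongr; exact hs k (s.min'_mem hne)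

/-- The two geometric series `∑ b^(n/q)` and `∑ b^(-(1/p - 1/q) n)`, each normalised by its
largest term. -/
def hedbergConst (b p q : ℝ) : ℝ :=
  b ^ (1 / q) / (b ^ (1 / q) - 1) + b ^ (1 / p - 1 / q) / (b ^ (1 / p - 1 / q) - 1)

lemma hedbergConst_nonneg {b p q : ℝ} (hb : 1 < b) (hp : 0 < p) (hpq : p < q) :
    0 ≤ hedbergConst b p q := by
  have hq : 0 < q := hp.trans hpq
  have h1 : 1 < b ^ (1 / q) := Real.one_lt_rpow hb (by positivity)
  have h2 : 1 < b ^ (1 / p - 1 / q) := Real.one_lt_rpow hb (by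
    rw [sub_pos]; exact one_div_lt_one_div_of_lt hp hpq)
  unfold hedbergConst
  have : 0 < b ^ (1 / q) - 1 := by linarith
  have : 0 < b ^ (1 / p - 1 / q) - 1 := by linarith
  positivity

lemma sum_rpow_mul_rpow_le_of_rpow_le {b p q θ : ℝ} (hb : 1 < b) (hp : 0 < p) (hq : 0 < q)
    (hθ : 0 ≤ θ) {s : Finset ℕ} (hs : ∀ n ∈ s, b ^ ((n : ℝ) / p) ≤ θ) :
    ∑ n ∈ s, b ^ (-((1 / p - 1 / q) * n)) * b ^ ((n : ℝ) / p) ≤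
      θ ^ (p / q) * (b ^ (1 / q) / (b ^ (1 / q) - 1)) := by
  have hb0 : 0 < b := by linarith
  have hterm (n : ℕ) : b ^ (-((1 / p - 1 / q) * n)) * b ^ ((n : ℝ) / p) = (b ^ (1 / q)) ^ n := by
    rw [← Real.rpow_add hb0, ← Real.rpow_natCast, ← Real.rpow_mul hb0.le]
    congr 1; ring
  simp only [hterm]
  refine sum_pow_le_mul_of_pow_le (Real.one_lt_rpow hb (by positivity)) (by positivity)
    fun n hn => ?_
  rw [← Real.rpow_natCast, ← Real.rpow_mul hb0.le,
    show 1 / q * n = n / p * (p / q) by field_simp, Real.rpow_mul hb0.le]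
  exact Real.rpow_le_rpow (by positivity) (hs n hn) (by positivity)

lemma sum_rpow_le_of_le_rpow {b p q θ : ℝ} (hb : 1 < b) (hp : 0 < p) (hpq : p < q) (hθ : 0 < θ)
    {s : Finset ℕ} (hs : ∀ n ∈ s, θ ≤ b ^ ((n : ℝ) / p)) :
    ∑ n ∈ s, b ^ (-((1 / p - 1 / q) * n)) ≤
      θ ^ (p / q - 1) * (b ^ (1 / p - 1 / q) / (b ^ (1 / p - 1 / q) - 1)) := by
  have hb0 : 0 < b := by linarith
  have hq : 0 < q := hp.trans hpq
  set ρ := b ^ (1 / p - 1 / q)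
  have hρ : 1 < ρ := Real.one_lt_rpow hb (by
    rw [sub_pos]; exact one_div_lt_one_div_of_lt hp hpq)
  have hterm (n : ℕ) : b ^ (-((1 / p - 1 / q) * n)) = ρ⁻¹ ^ n := by
    rw [← Real.rpow_natCast, Real.inv_rpow (by positivity), ← Real.rpow_mul hb0.le,
      Real.rpow_neg hb0.le]
  have hρ' : ρ / (ρ - 1) = 1 / (1 - ρ⁻¹) := by
    have : ρ - 1 ≠ 0 := by linarith
    field_simp
  simp only [hterm]
  rw [hρ', ← div_eq_mul_one_div]
  refine sum_pow_le_div_of_pow_le (by positivity) (inv_lt_one_of_one_lt₀ hρ) (by positivity)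
    fun n hn => ?_
  rw [← hterm, show -((1 / p - 1 / q) * n) = n / p * (p / q - 1) by field_simp; ring,
    Real.rpow_mul hb0.le]
  exact Real.rpow_le_rpow_of_nonpos hθ (hs n hn)
    (by rw [sub_nonpos]; exact ((div_lt_one hq).2 hpq).le)

/-- **Hedberg's inequality**, split at the index where `b^(n/p) a` overtakes `g`. -/
lemma sum_rpow_mul_min_le {b p q a g : ℝ} (hb : 1 < b) (hp : 0 < p) (hpq : p < q)
    (ha : 0 ≤ a) (hg : 0 ≤ g) (s : Finset ℕ) :
    ∑ n ∈ s, b ^ (-((1 / p - 1 / q) * n)) * min (b ^ ((n : ℝ) / p) * a) g ≤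
      hedbergConst b p q * (a ^ (1 - p / q) * g ^ (p / q)) := by
  have hq : 0 < q := hp.trans hpq
  rcases ha.eq_or_lt with rfl | ha
  · simp [min_eq_left hg, Real.zero_rpow (sub_pos.2 ((div_lt_one hq).2 hpq)).ne']
  rcases hg.eq_or_lt with rfl | hg
  · rw [sum_eq_zero fun n _ => by rw [min_eq_right (by positivity), mul_zero]]
    simp [Real.zero_rpow (div_pos hp hq).ne']
  set θ := g / a
  have hθ : 0 < θ := div_pos hg ha
  have hθa : a ^ (1 - p / q) * g ^ (p / q) = θ ^ (p / q) * a := by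
    rw [Real.div_rpow hg.le ha.le, Real.rpow_sub ha, Real.rpow_one]; field_simp
  have hθg : a ^ (1 - p / q) * g ^ (p / q) = θ ^ (p / q - 1) * g := by
    rw [hθa, Real.rpow_sub_one hθ.ne', div_mul_eq_mul_div, mul_div_assoc, div_div_cancel₀ hg.ne']
  have hlow := sum_rpow_mul_rpow_le_of_rpow_le hb hp hq hθ.le
    (s := s.filter fun n : ℕ => b ^ ((n : ℝ) / p) * a ≤ g)
    fun n hn => (le_div_iff₀ ha).2 (mem_filter.1 hn).2
  have hhigh := sum_rpow_le_of_le_rpow hb hp hpq hθ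
    (s := s.filter fun n : ℕ => ¬ b ^ ((n : ℝ) / p) * a ≤ g)
    fun n hn => (div_le_iff₀ ha).2 (le_of_not_ge (mem_filter.1 hn).2)
  rw [← sum_filter_add_sum_filter_not s (fun n : ℕ => b ^ ((n : ℝ) / p) * a ≤ g)]
  calc _ = (∑ n ∈ s with b ^ (((n : ℕ) : ℝ) / p) * a ≤ g,
          b ^ (-((1 / p - 1 / q) * n)) * b ^ ((n : ℝ) / p)) * a +
        (∑ n ∈ s with ¬ b ^ (((n : ℕ) : ℝ) / p) * a ≤ g, b ^ (-((1 / p - 1 / q) * n))) * g := by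
        rw [sum_mul, sum_mul]
        congr 1 <;> refine sum_congr rfl fun n hn => ?_
        · rw [min_eq_left (mem_filter.1 hn).2, mul_assoc]
        · rw [min_eq_right (le_of_not_ge (mem_filter.1 hn).2)]
    _ ≤ θ ^ (p / q) * (b ^ (1 / q) / (b ^ (1 / q) - 1)) * a +
        θ ^ (p / q - 1) * (b ^ (1 / p - 1 / q) / (b ^ (1 / p - 1 / q) - 1)) * g := by
        gcongr
    _ = hedbergConst b p q * (a ^ (1 - p / q) * g ^ (p / q)) := by
        rw [hedbergConst, add_mul]
        nth_rw 1 [hθa]; rw [hθg]; ring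

lemma abs_sum_rpow_smul_sub_le {b p q a g : ℝ} (hb : 1 < b) (hp : 0 < p) (hpq : p < q)
    (ha : 0 ≤ a) (v : ℕ → ℝ) (N : ℕ) (hva : ∀ n ≤ N, |v n| ≤ b ^ ((n : ℝ) / p) * a)
    (hvg : ∀ n ≤ N, |v n| ≤ g) :
    |∑ n ∈ Icc 1 N, b ^ (-((1 / p - 1 / q) * n)) • (v n - v (n - 1))| ≤
      2 * hedbergConst b p q * (a ^ (1 - p / q) * g ^ (p / q)) := by
  have hg : 0 ≤ g := (abs_nonneg _).trans (hvg 0 N.zero_le)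
  have hv (n : ℕ) (hn : n ≤ N) : |v n - v (n - 1)| ≤ 2 * min (b ^ ((n : ℝ) / p) * a) g := by
    have hprev : b ^ (((n - 1 : ℕ) : ℝ) / p) * a ≤ b ^ ((n : ℝ) / p) * a := by
      gcongr
      · exact hb.le
      · exact Nat.cast_le.2 (n.sub_le 1)
    have h1 := le_min (hva n hn) (hvg n hn)
    have h2 := le_min ((hva (n - 1) ((n.sub_le 1).trans hn)).trans hprev)
      (hvg (n - 1) ((n.sub_le 1).trans hn))
    linarith [abs_sub (v n) (v (n - 1))]
  calc _ ≤ ∑ n ∈ Icc 1 N, |b ^ (-((1 / p - 1 / q) * n)) • (v n - v (n - 1))| :=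
        abs_sum_le_sum_abs _ _
    _ ≤ ∑ n ∈ Icc 1 N, 2 * (b ^ (-((1 / p - 1 / q) * n)) * min (b ^ ((n : ℝ) / p) * a) g) := by
        refine sum_le_sum fun n hn => ?_
        rw [smul_eq_mul, abs_mul, abs_of_pos (Real.rpow_pos_of_pos (by linarith) _), mul_left_comm]
        gcongr
        exact hv n (mem_Icc.1 hn).2
    _ ≤ 2 * hedbergConst b p q * (a ^ (1 - p / q) * g ^ (p / q)) := by
        rw [← mul_sum, mul_assoc]
        gcongr
        exact sum_rpow_mul_min_le hb hp hpq ha hg _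

end Hedberg

section WeakType

open MeasureTheory

variable {ι : Type*} [Fintype ι] {p : ℝ} {g h : ι → ℝ}

lemma integral_indicator_Iio_rpow {r c T : ℝ} (hr : -1 < r) (hc : 0 ≤ c) (hcT : c ≤ T) :
    ∫ t in Set.Ioc 0 T, (Set.Iio c).indicator (fun t => t ^ r) t = c ^ (r + 1) / (r + 1) := by
  have hset : Set.Iio c ∩ Set.Ioc 0 T = Set.Ioo 0 c := by
    ext t
    simp only [Set.mem_inter_iff, Set.mem_Iio, Set.mem_Ioc, Set.mem_Ioo]
    constructor
    · rintro ⟨h1, h2, -⟩; exact ⟨h2, h1⟩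
    · rintro ⟨h1, h2⟩; exact ⟨h2, h1, h2.le.trans hcT⟩
  rw [integral_indicator measurableSet_Iio, Measure.restrict_restrict measurableSet_Iio, hset,
    ← integral_Ioc_eq_integral_Ioo, ← intervalIntegral.integral_of_le hc,
    integral_rpow (Or.inl hr), Real.zero_rpow (by linarith), sub_zero]

lemma integrableOn_indicator_Iio_rpow {r : ℝ} (hr : -1 < r) (c : ℝ) {T : ℝ} (hT : 0 ≤ T) :
    IntegrableOn ((Set.Iio c).indicator fun t => t ^ r) (Set.Ioc 0 T) := by
  refine Integrable.indicator ?_ measurableSet_Iio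
  exact (intervalIntegrable_iff_integrableOn_Ioc_of_le hT).1
    (intervalIntegral.intervalIntegrable_rpow' hr)

/-- Layer-cake formula `g^p = p ∫₀^g t^(p-1) dt`, with the weak-type bound applied at each
level `t`. -/
lemma sum_rpow_le_mul_sum_mul_rpow_of_weakType (hp : 1 < p) (hg : 0 ≤ g)
    (hweak : ∀ t > 0, t * #{i | t < g i} ≤ ∑ i with t < g i, h i) :
    ∑ i, g i ^ p ≤ p / (p - 1) * ∑ i, h i * g i ^ (p - 1) := by
  set T := ∑ i, g i
  have hgT (i : ι) : g i ≤ T := single_le_sum (fun j _ => hg j) (mem_univ i)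
  have hT : 0 ≤ T := sum_nonneg fun i _ => hg i
  have hint {r : ℝ} (hr : -1 < r) (i : ι) :=
    integrableOn_indicator_Iio_rpow hr (g i) hT
  have hlevel : ∀ t ∈ Set.Ioc 0 T, ∑ i, (Set.Iio (g i)).indicator (fun t => t ^ (p - 1)) t ≤
      ∑ i, (Set.Iio (g i)).indicator (fun t => t ^ (p - 2)) t * h i := by
    rintro t ⟨ht, -⟩
    simp only [Set.indicator_apply, Set.mem_Iio, ite_mul, zero_mul]
    rw [← sum_filter, ← sum_filter, sum_const, nsmul_eq_mul, ← mul_sum,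
      show p - 1 = (p - 2) + 1 by ring, Real.rpow_add_one ht.ne']
    linarith [mul_le_mul_of_nonneg_left (hweak t ht) (by positivity : 0 ≤ t ^ (p - 2))]
  calc ∑ i, g i ^ p
      = p * ∫ t in Set.Ioc 0 T, ∑ i, (Set.Iio (g i)).indicator (fun t => t ^ (p - 1)) t := by
        rw [integral_finsetSum _ fun i _ => hint (by linarith) i, mul_sum]
        refine sum_congr rfl fun i _ => ?_
        rw [integral_indicator_Iio_rpow (by linarith) (hg i) (hgT i), sub_add_cancel]
        field_simp
    _ ≤ p * ∫ t in Set.Ioc 0 T, ∑ i, (Set.Iio (g i)).indicator (fun t => t ^ (p - 2)) t * h i := by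
        refine mul_le_mul_of_nonneg_left ?_ (by linarith)
        exact setIntegral_mono_on (integrable_finsetSum _ fun i _ => hint (by linarith) i)
          (integrable_finsetSum _ fun i _ => (hint (by linarith) i).mul_const _)
          measurableSet_Ioc hlevel
    _ = p / (p - 1) * ∑ i, h i * g i ^ (p - 1) := by
        rw [integral_finsetSum _ fun i _ => (hint (by linarith) i).mul_const _, mul_sum, mul_sum]
        refine sum_congr rfl fun i _ => ?_
        rw [integral_mul_const, integral_indicator_Iio_rpow (by linarith) (hg i) (hgT i),
          show p - 2 + 1 = p - 1 by ring]
        have : p - 1 ≠ 0 := by linarith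
        field_simp

/-- Hölder's inequality bounds `∑ h g^(p-1)` by `‖h‖_p ‖g‖_p^(p-1)`; the factor `‖g‖_p^(p-1)`
is then absorbed into the left-hand side. -/
lemma sum_rpow_le_of_le_mul_sum_mul_rpow (hp : 1 < p) (hg : 0 ≤ g) (hh : 0 ≤ h) {c : ℝ}
    (hc : 0 ≤ c) (H : ∑ i, g i ^ p ≤ c * ∑ i, h i * g i ^ (p - 1)) :
    ∑ i, g i ^ p ≤ c ^ p * ∑ i, h i ^ p := by
  have hp0 : 0 < p := by linarith
  set X := ∑ i, g i ^ p
  set Y := ∑ i, h i ^ p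
  have hX : 0 ≤ X := sum_nonneg fun i _ => Real.rpow_nonneg (hg i) p
  have hY : 0 ≤ Y := sum_nonneg fun i _ => Real.rpow_nonneg (hh i) p
  have hholder : ∑ i, h i * g i ^ (p - 1) ≤ Y ^ (1 / p) * X ^ ((p - 1) / p) := by
    have := Real.inner_le_Lp_mul_Lq_of_nonneg univ (Real.HolderConjugate.conjExponent hp)
      (fun i _ => hh i) (fun i _ => Real.rpow_nonneg (hg i) (p - 1))
    refine this.trans_eq ?_
    rw [Real.conjExponent, one_div_div]
    show _ * (∑ i : ι, _) ^ _ = _ * (∑ i, g i ^ p) ^ _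
    congr 2
    refine sum_congr rfl fun i _ => ?_
    rw [← Real.rpow_mul (hg i), mul_div_cancel₀ _ (by linarith : p - 1 ≠ 0)]
  rcases hX.eq_or_lt with hX0 | hX0
  · rw [← hX0]; positivity
  have hsplit : X = X ^ (1 / p) * X ^ ((p - 1) / p) := by
    rw [← Real.rpow_add hX0, ← add_div, add_sub_cancel, div_self hp0.ne', Real.rpow_one]
  have hroot : X ^ (1 / p) ≤ c * Y ^ (1 / p) := by
    refine le_of_mul_le_mul_right ?_ (Real.rpow_pos_of_pos hX0 ((p - 1) / p))
    rw [← hsplit, mul_assoc]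
    exact H.trans (mul_le_mul_of_nonneg_left hholder hc)
  calc X = (X ^ (1 / p)) ^ p := by
        rw [← Real.rpow_mul hX, one_div_mul_cancel hp0.ne', Real.rpow_one]
    _ ≤ (c * Y ^ (1 / p)) ^ p := by gcongr
    _ = c ^ p * Y := by
      rw [Real.mul_rpow hc (by positivity), ← Real.rpow_mul hY, one_div_mul_cancel hp0.ne',
        Real.rpow_one]

theorem sum_rpow_le_of_weakType (hp : 1 < p) (hg : 0 ≤ g) (hh : 0 ≤ h)
    (hweak : ∀ t > 0, t * #{i | t < g i} ≤ ∑ i with t < g i, h i) :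
    ∑ i, g i ^ p ≤ (p / (p - 1)) ^ p * ∑ i, h i ^ p :=
  sum_rpow_le_of_le_mul_sum_mul_rpow hp hg hh (div_nonneg (by linarith) (by linarith))
    (sum_rpow_le_mul_sum_mul_rpow_of_weakType hp hg hweak)

end WeakType

lemma AdaptedFun.dependsOn {m : ℕ} {E : Type*} {F : ℕ → (ℕ → Fin m) → E} (hF : AdaptedFun m F)
    (n : ℕ) : DependsOn (F n) (Set.Iio n) :=
  fun x y hxy => hF n x y hxy

lemma AdaptedFun.dependsOn_rieszSum {m : ℕ} {E : Type*} [AddCommGroup E] [Module ℝ E]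
    {F : ℕ → (ℕ → Fin m) → E} (hF : AdaptedFun m F) (α : ℝ) (N : ℕ) :
    DependsOn (rieszSum m α F N) (Set.Iio N) := fun x y hxy => by
  refine sum_congr rfl fun n hn => ?_
  have hnN := (mem_Icc.1 hn).2
  rw [((hF.dependsOn n).mono (Set.Iio_subset_Iio hnN)) hxy,
    ((hF.dependsOn (n - 1)).mono (Set.Iio_subset_Iio (n.sub_le 1 |>.trans hnN))) hxy]

section MaximalFunction

variable {α : Type*} {F : ℕ → α → ℝ} {k : ℕ} {x : α}

def maximalFunction (F : ℕ → α → ℝ) (k : ℕ) (x : α) : ℝ :=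
  partialSups (fun n => |F n x|) k

lemma abs_le_maximalFunction {n : ℕ} (h : n ≤ k) : |F n x| ≤ maximalFunction F k x :=
  le_partialSups_of_le (fun n => |F n x|) h

lemma maximalFunction_nonneg : 0 ≤ maximalFunction F k x :=
  (abs_nonneg _).trans (abs_le_maximalFunction k.zero_le)

@[simp] lemma maximalFunction_zero : maximalFunction F 0 x = |F 0 x| :=
  partialSups_zero _

lemma maximalFunction_succ :
    maximalFunction F (k + 1) x = max (maximalFunction F k x) |F (k + 1) x| :=
  partialSups_succ _ k

lemma AdaptedFun.dependsOn_maximalFunction {m : ℕ} {F : ℕ → (ℕ → Fin m) → ℝ}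
    (hF : AdaptedFun m F) (k : ℕ) : DependsOn (maximalFunction F k) (Set.Iio k) := by
  induction k with
  | zero => exact fun x y hxy => by simp only [maximalFunction_zero, hF.dependsOn 0 hxy]
  | succ k ih =>
    intro x y hxy
    rw [maximalFunction_succ, maximalFunction_succ, hF.dependsOn (k + 1) hxy,
      ih.mono (Set.Iio_subset_Iio k.le_succ) hxy]

end MaximalFunction

section Words

variable {m : ℕ} [NeZero m] {N : ℕ}

def zeroExtend (w : Fin N → Fin m) : ℕ → Fin m :=
  fun i => if h : i < N then w ⟨i, h⟩ else 0

@[simp] lemma zeroExtend_apply (w : Fin N → Fin m) (i : Fin N) : zeroExtend w i = w i :=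
  dif_pos i.isLt

lemma zeroExtend_update (w : Fin N → Fin m) (i : Fin N) (j : Fin m) :
    zeroExtend (Function.update w i j) = Function.update (zeroExtend w) i j := by
  funext l
  by_cases hl : l = i
  · subst hl; simp
  · rw [Function.update_of_ne hl]
    unfold zeroExtend
    split_ifs with h
    · exact Function.update_of_ne (fun hi => hl (by rw [← hi])) _ _
    · rfl

lemma DependsOn.apply_zeroExtend {β : Type*} {f : (ℕ → Fin m) → β} (hf : DependsOn f (Set.Iio N))
    (x : ℕ → Fin m) : f (zeroExtend fun i : Fin N => x i) = f x :=
  hf fun i hi => zeroExtend_apply _ ⟨i, hi⟩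

lemma sum_sum_update_eq_card_smul {ι β M : Type*} [Fintype ι] [DecidableEq ι] [Fintype β]
    [AddCommMonoid M] (i : ι) (φ : (ι → β) → M) :
    ∑ x, ∑ j, φ (Function.update x i j) = Fintype.card β • ∑ x, φ x := by
  let e : (ι → β) × β ≃ (ι → β) × β :=
    { toFun := fun xj => (Function.update xj.1 i xj.2, xj.1 i)
      invFun := fun yb => (Function.update yb.1 i yb.2, yb.1 i)
      left_inv := fun ⟨x, j⟩ => by simp
      right_inv := fun ⟨y, b⟩ => by simp }
  rw [← Fintype.sum_prod_type',
    Fintype.sum_equiv e (fun xj => φ (Function.update xj.1 i xj.2)) (fun yb => φ yb.1)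
      fun _ => rfl,
    Fintype.sum_prod_type, smul_sum]
  simp only [sum_const, card_univ]

variable {F : ℕ → (ℕ → Fin m) → ℝ} {k : ℕ} {g : (ℕ → Fin m) → ℝ}

lemma IsMartingaleFun.sum_mul_succ (hF : IsMartingaleFun m F) (hk : k < N)
    (hg : DependsOn g (Set.Iio k)) :
    ∑ w : Fin N → Fin m, g (zeroExtend w) * F (k + 1) (zeroExtend w) =
      ∑ w : Fin N → Fin m, g (zeroExtend w) * F k (zeroExtend w) := by
  have hm : (m : ℝ) ≠ 0 := Nat.cast_ne_zero.2 (NeZero.ne m)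
  have hupdate (x : ℕ → Fin m) (j : Fin m) : g (Function.update x k j) = g x :=
    hg fun i hi => Function.update_of_ne (ne_of_lt hi) _ _
  refine mul_left_cancel₀ hm ?_
  calc (m : ℝ) * ∑ w : Fin N → Fin m, g (zeroExtend w) * F (k + 1) (zeroExtend w)
      = ∑ w : Fin N → Fin m, ∑ j : Fin m, g (zeroExtend (Function.update w ⟨k, hk⟩ j)) *
          F (k + 1) (zeroExtend (Function.update w ⟨k, hk⟩ j)) := by
        rw [sum_sum_update_eq_card_smul (⟨k, hk⟩ : Fin N)
          (fun w => g (zeroExtend w) * F (k + 1) (zeroExtend w)), Fintype.card_fin, nsmul_eq_mul]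
    _ = ∑ w : Fin N → Fin m, g (zeroExtend w) * ((m : ℝ) • F k (zeroExtend w)) := by
        refine sum_congr rfl fun w _ => ?_
        simp only [hF.2, mul_sum, zeroExtend_update, hupdate]
    _ = (m : ℝ) * ∑ w : Fin N → Fin m, g (zeroExtend w) * F k (zeroExtend w) := by
        rw [mul_sum]
        refine sum_congr rfl fun w _ => ?_
        rw [smul_eq_mul]; ring

lemma IsMartingaleFun.sum_mul_abs_le_succ (hF : IsMartingaleFun m F) (hk : k < N)
    (hg : DependsOn g (Set.Iio k)) (hg0 : 0 ≤ g) :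
    ∑ w : Fin N → Fin m, g (zeroExtend w) * |F k (zeroExtend w)| ≤
      ∑ w : Fin N → Fin m, g (zeroExtend w) * |F (k + 1) (zeroExtend w)| := by
  have hsign : DependsOn (fun x => g x * SignType.sign (F k x)) (Set.Iio k) :=
    fun x y hxy => by simp only [hg hxy, hF.1.dependsOn k hxy]
  calc ∑ w : Fin N → Fin m, g (zeroExtend w) * |F k (zeroExtend w)|
      = ∑ w : Fin N → Fin m, g (zeroExtend w) * SignType.sign (F k (zeroExtend w)) *
          F k (zeroExtend w) := by
        simp only [mul_assoc, sign_mul_self]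
    _ = ∑ w : Fin N → Fin m, g (zeroExtend w) * SignType.sign (F k (zeroExtend w)) *
          F (k + 1) (zeroExtend w) := (hF.sum_mul_succ hk hsign).symm
    _ ≤ ∑ w : Fin N → Fin m, g (zeroExtend w) * |F (k + 1) (zeroExtend w)| := by
        refine sum_le_sum fun w _ => ?_
        rw [mul_assoc]
        refine mul_le_mul_of_nonneg_left ?_ (hg0 _)
        rcases lt_trichotomy (F k (zeroExtend w)) 0 with h | h | h <;>
          simp [h, neg_le_abs, le_abs_self]

lemma IsMartingaleFun.mul_card_lt_maximalFunction_le (hF : IsMartingaleFun m F) (hk : k ≤ N)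
    (t : ℝ) :
    t * #{w : Fin N → Fin m | t < maximalFunction F k (zeroExtend w)} ≤
      ∑ w : Fin N → Fin m with t < maximalFunction F k (zeroExtend w), |F k (zeroExtend w)| := by
  set χ : ℕ → (ℕ → Fin m) → ℝ := fun k x => if t < maximalFunction F k x then 1 else 0
  suffices h : t * ∑ w : Fin N → Fin m, χ k (zeroExtend w) ≤
      ∑ w : Fin N → Fin m, χ k (zeroExtend w) * |F k (zeroExtend w)| by
    simpa only [χ, sum_boole, ite_mul, one_mul, zero_mul, ← sum_filter] using h
  induction k with
  | zero =>
    rw [mul_sum]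
    refine sum_le_sum fun w _ => ?_
    simp only [χ, maximalFunction_zero]
    split_ifs with h <;> linarith
  | succ k ih =>
    have hχ : DependsOn (χ k) (Set.Iio k) := fun x y hxy => by
      simp only [χ, hF.1.dependsOn_maximalFunction k hxy]
    have hsub := hF.sum_mul_abs_le_succ (N := N) (by omega) hχ fun x => by
      simp only [χ]; split_ifs <;> norm_num
    -- `χ (k + 1) - χ k` is the indicator of the points where `|F (k + 1)|` first exceeds `t`
    have hstep (x : ℕ → Fin m) :
        t * (χ (k + 1) x - χ k x) ≤ (χ (k + 1) x - χ k x) * |F (k + 1) x| := by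
      simp only [χ, maximalFunction_succ, lt_max_iff]
      by_cases h1 : t < maximalFunction F k x
      · simp [h1]
      · by_cases h2 : t < |F (k + 1) x|
        · simp [h1, h2, h2.le]
        · simp [h1, h2]
    have := sum_le_sum fun (w : Fin N → Fin m) (_ : w ∈ univ) => hstep (zeroExtend w)
    simp only [mul_sub, sub_mul, sum_sub_distrib, ← mul_sum] at this
    linarith [ih (by omega)]

theorem IsMartingaleFun.sum_maximalFunction_rpow_le (hF : IsMartingaleFun m F) {p : ℝ}
    (hp : 1 < p) :
    ∑ w : Fin N → Fin m, maximalFunction F N (zeroExtend w) ^ p ≤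
      (p / (p - 1)) ^ p * ∑ w : Fin N → Fin m, |F N (zeroExtend w)| ^ p :=
  sum_rpow_le_of_weakType hp (fun _ => maximalFunction_nonneg) (fun _ => abs_nonneg _)
    fun t _ => hF.mul_card_lt_maximalFunction_le le_rfl t

end Words

section Cylinders

open MeasureTheory

variable {m N : ℕ}

lemma measurableSet_cyl (w : Fin N → Fin m) : MeasurableSet (cyl m N w) := by
  have : cyl m N w = ⋂ i : Fin N, (fun x : ℕ → Fin m => x i) ⁻¹' {w i} := by
    ext x; simp [cyl]
  rw [this]
  exact .iInter fun i => measurable_pi_apply _ (measurableSet_singleton _)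

variable [NeZero m] {P : Measure (ℕ → Fin m)}

lemma lintegral_eq_sum_zeroExtend (hP : ∀ w : Fin N → Fin m, P (cyl m N w) = (m : ℝ≥0∞)⁻¹ ^ N)
    {h : (ℕ → Fin m) → ℝ≥0∞} (hh : DependsOn h (Set.Iio N)) :
    ∫⁻ x, h x ∂P = (∑ w : Fin N → Fin m, h (zeroExtend w)) * (m : ℝ≥0∞)⁻¹ ^ N := by
  have hpartition (x : ℕ → Fin m) :
      h x = ∑ w : Fin N → Fin m, (cyl m N w).indicator (fun _ => h (zeroExtend w)) x := by
    rw [sum_eq_single (fun i : Fin N => x i),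
      Set.indicator_of_mem (show x ∈ cyl m N _ from fun i => rfl),
      hh.apply_zeroExtend]
    · intro w _ hw
      exact Set.indicator_of_notMem (fun hx => hw (funext fun i => (hx i).symm)) _
    · exact fun h => absurd (mem_univ _) h
  rw [lintegral_congr hpartition,
    lintegral_finsetSum _ fun w _ => measurable_const.indicator (measurableSet_cyl w), sum_mul]
  exact sum_congr rfl fun w _ => by rw [lintegral_indicator_const (measurableSet_cyl w), hP]

lemma eLpNorm_le_ofReal_iff (hP : ∀ w : Fin N → Fin m, P (cyl m N w) = (m : ℝ≥0∞)⁻¹ ^ N)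
    {r : ℝ} (hr : 0 < r) {h : (ℕ → Fin m) → ℝ} (hh : DependsOn h (Set.Iio N)) {c : ℝ}
    (hc : 0 ≤ c) :
    eLpNorm h (ENNReal.ofReal r) P ≤ ENNReal.ofReal c ↔
      ∑ w : Fin N → Fin m, |h (zeroExtend w)| ^ r ≤ (m : ℝ) ^ N * c ^ r := by
  have hmN : ((m : ℝ≥0∞) ^ N) ≠ 0 := pow_ne_zero _ (Nat.cast_ne_zero.2 (NeZero.ne m))
  rw [eLpNorm_eq_lintegral_rpow_enorm_toReal (by simpa using hr) ENNReal.ofReal_ne_top,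
    ENNReal.toReal_ofReal hr.le, lintegral_eq_sum_zeroExtend hP fun x y hxy => by rw [hh hxy],
    one_div, ENNReal.rpow_inv_le_iff hr, ENNReal.ofReal_rpow_of_nonneg hc hr.le, ← ENNReal.inv_pow,
    ← div_eq_mul_inv, ENNReal.div_le_iff hmN (ENNReal.pow_ne_top (ENNReal.natCast_ne_top m))]
  simp only [Real.enorm_eq_ofReal_abs]
  rw [sum_congr rfl fun w _ => ENNReal.ofReal_rpow_of_nonneg (abs_nonneg _) hr.le,
    ← ENNReal.ofReal_sum_of_nonneg fun w _ => by positivity, ← ENNReal.ofReal_natCast,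
    ← ENNReal.ofReal_pow (Nat.cast_nonneg m), ← ENNReal.ofReal_mul (by positivity),
    ENNReal.ofReal_le_ofReal_iff (by positivity), mul_comm]

lemma abs_le_of_eLpNorm_le (hP : ∀ w : Fin N → Fin m, P (cyl m N w) = (m : ℝ≥0∞)⁻¹ ^ N)
    {r : ℝ} (hr : 0 < r) {h : (ℕ → Fin m) → ℝ} (hh : DependsOn h (Set.Iio N)) {c : ℝ}
    (hc : 0 ≤ c) (H : eLpNorm h (ENNReal.ofReal r) P ≤ ENNReal.ofReal c) (x : ℕ → Fin m) :
    |h x| ≤ (m : ℝ) ^ ((N : ℝ) / r) * c := by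
  have hx : |h x| ^ r ≤ (m : ℝ) ^ N * c ^ r := by
    rw [← hh.apply_zeroExtend x]
    exact (single_le_sum (f := fun w => |h (zeroExtend w)| ^ r) (fun _ _ => by positivity)
      (mem_univ _)).trans ((eLpNorm_le_ofReal_iff hP hr hh hc).1 H)
  calc |h x| = (|h x| ^ r) ^ (1 / r) := by
        rw [← Real.rpow_mul (abs_nonneg _), mul_one_div_cancel hr.ne', Real.rpow_one]
    _ ≤ ((m : ℝ) ^ N * c ^ r) ^ (1 / r) := by gcongr
    _ = (m : ℝ) ^ ((N : ℝ) / r) * c := by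
        rw [Real.mul_rpow (by positivity) (by positivity), ← Real.rpow_natCast,
          ← Real.rpow_mul (Nat.cast_nonneg m), ← Real.rpow_mul hc, mul_one_div,
          mul_one_div_cancel hr.ne', Real.rpow_one]

end Cylinders

section Main

variable {m N : ℕ} {F : ℕ → (ℕ → Fin m) → ℝ}

def hardyLittlewoodSobolevConst (b p q : ℝ) : ℝ :=
  2 * hedbergConst b p q * (p / (p - 1)) ^ (p / q)

lemma hardyLittlewoodSobolevConst_nonneg {b p q : ℝ} (hb : 1 < b) (hp : 1 < p) (hpq : p < q) :
    0 ≤ hardyLittlewoodSobolevConst b p q := by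
  have := hedbergConst_nonneg hb (by linarith) hpq
  have : 0 ≤ p / (p - 1) := div_nonneg (by linarith) (by linarith)
  unfold hardyLittlewoodSobolevConst
  positivity

lemma abs_rieszSum_rpow_le (hm : 1 < m) {p q a : ℝ} (hp : 0 < p) (hpq : p < q) (ha : 0 ≤ a)
    (hFa : ∀ n x, |F n x| ≤ (m : ℝ) ^ ((n : ℝ) / p) * a) (x : ℕ → Fin m) :
    |rieszSum m (1 / p - 1 / q) F N x| ^ q ≤
      (2 * hedbergConst m p q) ^ q * a ^ (q - p) * maximalFunction F N x ^ p := by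
  have hm' : (1 : ℝ) < m := Nat.one_lt_cast.2 hm
  have hq : 0 < q := hp.trans hpq
  have hK : 0 ≤ 2 * hedbergConst m p q := by
    have := hedbergConst_nonneg hm' hp hpq; positivity
  have hM : 0 ≤ maximalFunction F N x := maximalFunction_nonneg
  have hhedberg := abs_sum_rpow_smul_sub_le hm' hp hpq ha (fun n => F n x) N
    (fun n _ => hFa n x) (fun n hn => abs_le_maximalFunction hn)
  calc |rieszSum m (1 / p - 1 / q) F N x| ^ q
      ≤ (2 * hedbergConst m p q * (a ^ (1 - p / q) * maximalFunction F N x ^ (p / q))) ^ q := by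
        gcongr; exact hhedberg
    _ = (2 * hedbergConst m p q) ^ q * a ^ (q - p) * maximalFunction F N x ^ p := by
        rw [Real.mul_rpow hK (mul_nonneg (Real.rpow_nonneg ha _) (Real.rpow_nonneg hM _)),
          Real.mul_rpow (Real.rpow_nonneg ha _) (Real.rpow_nonneg hM _),
          ← Real.rpow_mul ha, ← Real.rpow_mul hM, sub_mul, one_mul, div_mul_cancel₀ _ hq.ne',
          mul_assoc]

theorem IsMartingaleFun.sum_abs_rieszSum_rpow_le [NeZero m] (hF : IsMartingaleFun m F) (hm : 1 < m)
    {p q a : ℝ} (hp : 1 < p) (hpq : p < q) (ha : 0 ≤ a)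
    (hFa : ∀ n x, |F n x| ≤ (m : ℝ) ^ ((n : ℝ) / p) * a)
    (hFN : ∑ w : Fin N → Fin m, |F N (zeroExtend w)| ^ p ≤ (m : ℝ) ^ N * a ^ p) :
    ∑ w : Fin N → Fin m, |rieszSum m (1 / p - 1 / q) F N (zeroExtend w)| ^ q ≤
      (m : ℝ) ^ N * (hardyLittlewoodSobolevConst m p q * a) ^ q := by
  have hq : 0 < q := by linarith
  have hK : 0 ≤ 2 * hedbergConst m p q := by
    have := hedbergConst_nonneg (Nat.one_lt_cast.2 hm) (by linarith) hpq; positivity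
  have hp' : 0 ≤ p / (p - 1) := div_nonneg (by linarith) (by linarith)
  set K := (2 * hedbergConst m p q) ^ q * a ^ (q - p)
  calc ∑ w : Fin N → Fin m, |rieszSum m (1 / p - 1 / q) F N (zeroExtend w)| ^ q
      ≤ K * ∑ w : Fin N → Fin m, maximalFunction F N (zeroExtend w) ^ p := by
        rw [mul_sum]
        exact sum_le_sum fun w _ => abs_rieszSum_rpow_le hm (by linarith) hpq ha hFa _
    _ ≤ K * ((p / (p - 1)) ^ p * ((m : ℝ) ^ N * a ^ p)) := by
        gcongr
        exact (hF.sum_maximalFunction_rpow_le hp).trans (by gcongr)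
    _ = (m : ℝ) ^ N * (hardyLittlewoodSobolevConst m p q * a) ^ q := by
        rw [hardyLittlewoodSobolevConst, Real.mul_rpow (mul_nonneg hK (Real.rpow_nonneg hp' _)) ha,
          Real.mul_rpow hK (Real.rpow_nonneg hp' _), ← Real.rpow_mul hp',
          div_mul_cancel₀ _ hq.ne', show a ^ q = a ^ (q - p) * a ^ p by
            rw [← Real.rpow_add' ha (by linarith), sub_add_cancel]]
        ring

end Main

end MartingaleModel

theorem martingale_hardy_littlewood_sobolev_general (m : ℕ) (hm : 3 ≤ m)
    (P : Measure (ℕ → Fin m))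
    (hPcyl : ∀ (n : ℕ) (w : Fin n → Fin m), P (cyl m n w) = ((m : ℝ≥0∞))⁻¹ ^ n)
    (p q : ℝ) (hp : 1 < p) (hpq : p < q) :
    ∃ C : ℝ≥0, ∀ F : ℕ → (ℕ → Fin m) → ℝ, IsMartingaleFun m F →
      (⨆ n, eLpNorm (F n) (ENNReal.ofReal p) P) < ⊤ →
      ∀ N, 1 ≤ N →
        eLpNorm (rieszSum m (1 / p - 1 / q) F N) (ENNReal.ofReal q) P ≤
          C * ⨆ n, eLpNorm (F n) (ENNReal.ofReal p) P := by
  have : NeZero m := ⟨by omega⟩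
  have hp0 : 0 < p := by linarith
  have hC := hardyLittlewoodSobolevConst_nonneg (Nat.one_lt_cast.2 (by omega : 1 < m)) hp hpq
  refine ⟨(hardyLittlewoodSobolevConst m p q).toNNReal, fun F hF hA N _ => ?_⟩
  set a := (⨆ n, eLpNorm (F n) (ENNReal.ofReal p) P).toReal
  have ha : ENNReal.ofReal a = ⨆ n, eLpNorm (F n) (ENNReal.ofReal p) P :=
    ENNReal.ofReal_toReal hA.ne
  have hFa (n : ℕ) : eLpNorm (F n) (ENNReal.ofReal p) P ≤ ENNReal.ofReal a :=
    (le_iSup (fun n => eLpNorm (F n) (ENNReal.ofReal p) P) n).trans_eq ha.symm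
  have hsum := hF.sum_abs_rieszSum_rpow_le (N := N) (by omega) hp hpq ENNReal.toReal_nonneg
    (fun n => abs_le_of_eLpNorm_le (hPcyl n) hp0 (hF.1.dependsOn n) ENNReal.toReal_nonneg (hFa n))
    ((eLpNorm_le_ofReal_iff (hPcyl N) hp0 (hF.1.dependsOn N) ENNReal.toReal_nonneg).1 (hFa N))
  calc eLpNorm (rieszSum m (1 / p - 1 / q) F N) (ENNReal.ofReal q) P
      ≤ ENNReal.ofReal (hardyLittlewoodSobolevConst m p q * a) :=
        (eLpNorm_le_ofReal_iff (hPcyl N) (by linarith) (hF.1.dependsOn_rieszSum _ N)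
          (mul_nonneg hC ENNReal.toReal_nonneg)).2 hsum
    _ = (hardyLittlewoodSobolevConst m p q).toNNReal * ⨆ n, eLpNorm (F n) (ENNReal.ofReal p) P := by
        rw [ENNReal.ofReal_mul hC, ha]; rfl

/-- **Martingale Hardy–Littlewood–Sobolev inequality.** For `1 < p < q < ∞` and
`α = 1/p - 1/q`, the Riesz potential `I_α` maps `L_p` to `L_q`: there is a constant
`C = C(m,p,q)` such that every real-valued martingale `F` adapted to the `m`-adic
filtration with `sup_n ‖F_n‖_{L_p(P)} < ∞` satisfies, for every `N ≥ 1`,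
`‖∑_{n=1}^N m^{-αn} f_n‖_{L_q(P)} ≤ C · sup_n ‖F_n‖_{L_p(P)}`. Here `P` is the uniform
product probability measure on `ℕ → Fin m`, characterized by its values on cylinders. -/
theorem martingale_hardy_littlewood_sobolev (m : ℕ) (hm : 3 ≤ m)
    (P : Measure (ℕ → Fin m)) (hP : IsProbabilityMeasure P)
    (hPcyl : ∀ (n : ℕ) (w : Fin n → Fin m), P (cyl m n w) = ((m : ℝ≥0∞))⁻¹ ^ n)
    (p q : ℝ) (hp : 1 < p) (hpq : p < q) :
    ∃ C : ℝ≥0, ∀ F : ℕ → (ℕ → Fin m) → ℝ, IsMartingaleFun m F →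
      (⨆ n, eLpNorm (F n) (ENNReal.ofReal p) P) < ⊤ →
      ∀ N, 1 ≤ N →
        eLpNorm (rieszSum m (1 / p - 1 / q) F N) (ENNReal.ofReal q) P ≤
          C * ⨆ n, eLpNorm (F n) (ENNReal.ofReal p) P :=
  martingale_hardy_littlewood_sobolev_general m hm P hPcyl p q hp hpq
end
end

section
/- For every p ∈ (1,∞) there is a constant C = C(m,p) such that every real-valued martingale F adapted to (ℱ_n) with E[sup_n |F_n|] < ∞ satisfies, for every N ≥ 1, ‖Σ_{n=1}^N m^{−((p−1)/p)·n}·f_n‖_{L_{p,1}(P)} ≤ C·E[sup_n |F_n|]; that is, the Riesz potential I_{(p−1)/p} maps the martingale Hardy space H_1 into the Lorentz space L_{p,1}. -/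
open MeasureTheory ENNReal NNReal

noncomputable section

open MartingaleModel

namespace MartingaleModel

/-- The Lorentz `L_{p,1}` quasinorm `‖g‖_{L_{p,1}} = ∫₀^∞ μ({x : ‖g(x)‖ > t})^{1/p} dt`. -/
def lorentzNorm {X : Type*} [MeasurableSpace X] (μ : Measure X) (p : ℝ)
    {E : Type*} [NormedAddCommGroup E] (g : X → E) : ℝ≥0∞ :=
  ∫⁻ t in Set.Ioi (0 : ℝ), (μ {x | t < ‖g x‖}) ^ (1 / p)

end MartingaleModel

/-!
Write `α = (p-1)/p`, `β = 1/p`, `ρ = m^(-α)`. Since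
`|f_n| ≤ Λ_n := |F_n - F_{n-1}| ≤ 2 sup_k |F_k|`, the potential is dominated by
`Ψ = ∑ ρⁿ Λ_n`, and it suffices to bound `‖Ψ‖_{L_{p,1}}` for an arbitrary nonnegative adapted
sequence `Λ`.

A nonempty level set `{Λ_n > t}` is a union of atoms of `ℱ_n`, so its measure is at least `m⁻ⁿ`.
Hence the first time `n₀` at which it is nonempty satisfies `ρ^n₀ ≤ y(t)^α`, where
`y(t) = P(sup_n Λ_n > t)`, and the layer cake formula gives `∫_E Ψ ≤ (1-ρ)⁻¹ G(P E)` for every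
set `E`, with the concave function `G(s) = ∫₀^∞ y(t)^α min(s, y(t)) dt`. As `G(s)/s` decreases,
this is a weak-type bound: `P(Ψ > T) ≤ 2⁻ᵏ` as soon as `T > (1-ρ)⁻¹ 2ᵏ G(2⁻ᵏ)`. Cutting the
Lorentz integral at these heights bounds it by a multiple of `G(1) + ∑ₖ 2^(αk) G(2⁻ᵏ)`, and
summing the series in `k` inside the integral over `t` leaves a multiple of
`∫₀^∞ y^α y^β dt = E sup_n Λ_n`.
-/

open Set

namespace ENNReal

lemma pow_rpow_comm (x : ℝ≥0∞) (r : ℝ) (n : ℕ) : (x ^ n) ^ r = (x ^ r) ^ n := by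
  rw [← rpow_natCast_mul, mul_comm, rpow_mul_natCast]

lemma sum_range_pow_le {r : ℝ≥0∞} (hr0 : r ≠ 0) (hr : r ≠ ⊤) (K : ℕ) :
    ∑ k ∈ Finset.range K, r ^ k ≤ r ^ (K - 1) * (1 - r⁻¹)⁻¹ := by
  calc ∑ k ∈ Finset.range K, r ^ k
      = ∑ k ∈ Finset.range K, r ^ (K - 1) * r⁻¹ ^ k := by
        rw [← Finset.sum_range_reflect]
        refine Finset.sum_congr rfl fun k hk => ?_
        have hsplit : K - 1 = (K - 1 - k) + k := by rw [Finset.mem_range] at hk; omega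
        conv_rhs =>
          rw [hsplit, pow_add, mul_assoc, ← mul_pow, ENNReal.mul_inv_cancel hr0 hr, one_pow,
            mul_one]
    _ ≤ ∑' k, r ^ (K - 1) * r⁻¹ ^ k := ENNReal.sum_le_tsum _
    _ = r ^ (K - 1) * (1 - r⁻¹)⁻¹ := by rw [ENNReal.tsum_mul_left, tsum_geometric]

lemma tsum_pow_add (r : ℝ≥0∞) (K : ℕ) : ∑' k, r ^ (k + K) = r ^ K * (1 - r)⁻¹ := by
  simp_rw [pow_add, ENNReal.tsum_mul_right, tsum_geometric, mul_comm]

/-- With `a = 2^(1-β)`, the sum is split at the first `K` with `2⁻ᴷ < y`: before `K` the terms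
are `aᵏ y`, a geometric sum dominated by its last term `a^(K-1) y ≤ y^β`; from `K` on they are
`(a/2)ᵏ = 2^(-βk)`, dominated by the first one `2^(-βK) ≤ y^β`. -/
lemma tsum_pow_mul_min_le {β : ℝ} (hβ0 : 0 < β) (hβ1 : β < 1) {y : ℝ≥0∞} (hy : y ≤ 1) :
    ∑' k, ((2 : ℝ≥0∞) ^ (1 - β)) ^ k * min (2⁻¹ ^ k) y ≤
      ((1 - ((2 : ℝ≥0∞) ^ (1 - β))⁻¹)⁻¹ + (1 - 2⁻¹ ^ β)⁻¹) * y ^ β := by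
  set a : ℝ≥0∞ := 2 ^ (1 - β)
  rcases eq_or_ne y 0 with rfl | hy0
  · simp
  have ha0 : a ≠ 0 := (rpow_pos two_pos ofNat_ne_top).ne'
  have ha : a ≠ ⊤ := rpow_ne_top_of_nonneg (by linarith) ofNat_ne_top
  have ha2 : a * 2⁻¹ = 2⁻¹ ^ β := by
    rw [inv_rpow, ← rpow_neg, ← rpow_neg_one, ← rpow_add _ _ two_ne_zero ofNat_ne_top]
    ring_nf
  have hex : ∃ K : ℕ, (2 : ℝ≥0∞)⁻¹ ^ K < y := exists_inv_two_pow_lt hy0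
  set K := Nat.find hex
  have hK : (2 : ℝ≥0∞)⁻¹ ^ K < y := Nat.find_spec hex
  have hK1 : K ≠ 0 := fun h => by simp [K, h] at hK; exact hK.not_ge hy
  have hyK : y ≤ 2⁻¹ ^ (K - 1) := not_lt.1 (Nat.find_min hex (by omega))
  have head : a ^ (K - 1) * y ≤ y ^ β := by
    have h2y : (2 : ℝ≥0∞) ^ (K - 1) * y ≤ 1 := by
      calc (2 : ℝ≥0∞) ^ (K - 1) * y ≤ 2 ^ (K - 1) * 2⁻¹ ^ (K - 1) := by gcongr
        _ = 1 := by rw [← mul_pow, ENNReal.mul_inv_cancel two_ne_zero ofNat_ne_top, one_pow]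
    calc a ^ (K - 1) * y = (2 ^ (K - 1) * y) ^ (1 - β) * y ^ β := by
          rw [mul_rpow_of_nonneg _ _ (by linarith), pow_rpow_comm, mul_assoc,
            ← rpow_add_of_nonneg _ _ (by linarith) hβ0.le, sub_add_cancel, rpow_one]
      _ ≤ 1 * y ^ β := by gcongr; exact rpow_le_one h2y (by linarith)
      _ = y ^ β := one_mul _
  have tail : (2⁻¹ ^ β) ^ K ≤ y ^ β := by
    rw [← pow_rpow_comm]; exact rpow_le_rpow hK.le hβ0.le
  rw [← ENNReal.summable.sum_add_tsum_nat_add' (k := K), add_mul]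
  gcongr
  · calc ∑ k ∈ Finset.range K, a ^ k * min (2⁻¹ ^ k) y
        ≤ (∑ k ∈ Finset.range K, a ^ k) * y := by
          rw [Finset.sum_mul]; gcongr; exact min_le_right _ _
      _ ≤ a ^ (K - 1) * (1 - a⁻¹)⁻¹ * y := by gcongr; exact sum_range_pow_le ha0 ha K
      _ ≤ (1 - a⁻¹)⁻¹ * y ^ β := by rw [mul_right_comm, mul_comm]; gcongr
  · calc ∑' k, a ^ (k + K) * min (2⁻¹ ^ (k + K)) y
        ≤ ∑' k, (2⁻¹ ^ β) ^ (k + K) := by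
          gcongr with k; rw [← ha2, mul_pow]; gcongr; exact min_le_left _ _
      _ ≤ (1 - 2⁻¹ ^ β)⁻¹ * y ^ β := by rw [tsum_pow_add, mul_comm]; gcongr

lemma eq_zero_of_le_pow {σ x : ℝ≥0∞} (hσ : σ < 1) (h : ∀ k : ℕ, x ≤ σ ^ k) : x = 0 :=
  le_antisymm (ge_of_tendsto' (tendsto_pow_atTop_nhds_zero_of_lt_one hσ) h) bot_le

end ENNReal

namespace MartingaleModel

lemma le_indicator_add_tsum_indicator {φ : ℝ → ℝ≥0∞} {t : ℕ → ℝ} {σ : ℝ≥0∞} (hσ : σ < 1)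
    (hφ : ∀ s, φ s ≤ 1) (hφt : ∀ k s, t k < s → φ s ≤ σ ^ k) (s : ℝ) :
    φ s ≤ (Iic (t 0)).indicator (fun _ => 1) s +
      ∑' k, (Ioc (t k) (t (k + 1))).indicator (fun _ => σ ^ k) s := by
  by_cases h0 : s ≤ t 0
  · rw [indicator_of_mem (show s ∈ Iic (t 0) from h0)]
    exact (hφ s).trans le_self_add
  by_cases hex : ∃ k, s ≤ t k
  · have hk : Nat.find hex ≠ 0 := fun h => h0 (h ▸ Nat.find_spec hex)
    obtain ⟨k, hk⟩ : ∃ k, Nat.find hex = k + 1 := Nat.exists_eq_succ_of_ne_zero hk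
    have hlt : t k < s := not_le.1 (Nat.find_min hex (by omega))
    have hmem : s ∈ Ioc (t k) (t (k + 1)) := ⟨hlt, hk ▸ Nat.find_spec hex⟩
    calc φ s ≤ (Ioc (t k) (t (k + 1))).indicator (fun _ => σ ^ k) s := by
          rw [indicator_of_mem hmem]; exact hφt k s hlt
      _ ≤ _ := (ENNReal.le_tsum k).trans le_add_self
  · simp only [not_exists, not_le] at hex
    rw [ENNReal.eq_zero_of_le_pow hσ fun k => hφt k s (hex k)]
    exact zero_le

lemma setLIntegral_Ioi_le_of_le_pow {φ : ℝ → ℝ≥0∞} {t : ℕ → ℝ} {σ : ℝ≥0∞} (hσ : σ < 1)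
    (hφ : ∀ s, φ s ≤ 1) (hφt : ∀ k s, t k < s → φ s ≤ σ ^ k) :
    ∫⁻ s in Ioi 0, φ s ≤ ENNReal.ofReal (t 0) + ∑' k, σ ^ k * ENNReal.ofReal (t (k + 1)) := by
  have hvol0 : volume (Iic (t 0) ∩ Ioi 0) ≤ ENNReal.ofReal (t 0) := by
    rw [inter_comm, Ioi_inter_Iic, Real.volume_Ioc, sub_zero]
  have hvol (k : ℕ) : volume (Ioc (t k) (t (k + 1)) ∩ Ioi 0) ≤ ENNReal.ofReal (t (k + 1)) := by
    calc volume (Ioc (t k) (t (k + 1)) ∩ Ioi 0) ≤ volume (Ioc 0 (t (k + 1))) :=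
          measure_mono fun x hx => ⟨hx.2, hx.1.2⟩
      _ = _ := by rw [Real.volume_Ioc, sub_zero]
  calc ∫⁻ s in Ioi 0, φ s
      ≤ ∫⁻ s in Ioi 0, ((Iic (t 0)).indicator (fun _ => 1) s +
          ∑' k, (Ioc (t k) (t (k + 1))).indicator (fun _ => σ ^ k) s) :=
        lintegral_mono fun s => le_indicator_add_tsum_indicator hσ hφ hφt s
    _ = volume (Iic (t 0) ∩ Ioi 0) + ∑' k, σ ^ k * volume (Ioc (t k) (t (k + 1)) ∩ Ioi 0) := by
        rw [lintegral_add_left (measurable_const.indicator measurableSet_Iic),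
          lintegral_tsum fun k => (measurable_const.indicator measurableSet_Ioc).aemeasurable,
          lintegral_indicator_const measurableSet_Iic, one_mul,
          Measure.restrict_apply measurableSet_Iic]
        congr 1
        refine tsum_congr fun k => ?_
        rw [lintegral_indicator_const measurableSet_Ioc, Measure.restrict_apply measurableSet_Ioc]
    _ ≤ _ := by
        gcongr with k
        exact hvol k

section Distribution

variable {X : Type*} [MeasurableSpace X] (μ : Measure X)

def distribution (f : X → ℝ≥0∞) (t : ℝ) : ℝ≥0∞ := μ {x | ENNReal.ofReal t < f x}

lemma distribution_antitone (f : X → ℝ≥0∞) : Antitone (distribution μ f) :=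
  fun _ _ hst => measure_mono fun _ hx => (ofReal_le_ofReal hst).trans_lt hx

lemma measurable_distribution (f : X → ℝ≥0∞) : Measurable (distribution μ f) :=
  (distribution_antitone μ f).measurable

lemma volume_Ioi_ofReal_lt (v : ℝ≥0∞) :
    volume.restrict (Ioi 0) {t : ℝ | ENNReal.ofReal t < v} = v := by
  rw [Measure.restrict_apply (measurableSet_lt measurable_ofReal measurable_const)]
  rcases eq_or_ne v ⊤ with rfl | hv
  · simp
  have : {t : ℝ | ENNReal.ofReal t < v} ∩ Ioi 0 = Ioo 0 v.toReal := by
    ext t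
    simp only [mem_inter_iff, mem_ofPred_eq, mem_Ioi, mem_Ioo]
    constructor
    · rintro ⟨h, ht⟩; exact ⟨ht, (ofReal_lt_iff_lt_toReal ht.le hv).1 h⟩
    · rintro ⟨ht, h⟩; exact ⟨(ofReal_lt_iff_lt_toReal ht.le hv).2 h, ht⟩
  rw [this, Real.volume_Ioo, sub_zero, ofReal_toReal hv]

lemma lintegral_distribution [SFinite μ] {f : X → ℝ≥0∞} (hf : Measurable f) :
    ∫⁻ t in Ioi 0, distribution μ f t = ∫⁻ x, f x ∂μ := by
  have hS : MeasurableSet {q : ℝ × X | ENNReal.ofReal q.1 < f q.2} :=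
    measurableSet_lt (measurable_ofReal.comp measurable_fst) (hf.comp measurable_snd)
  calc ∫⁻ t in Ioi 0, distribution μ f t
      = ((volume.restrict (Ioi 0)).prod μ) {q : ℝ × X | ENNReal.ofReal q.1 < f q.2} :=
        (Measure.prod_apply hS).symm
    _ = ∫⁻ x, f x ∂μ := by
        rw [Measure.prod_apply_symm hS]
        exact lintegral_congr fun x => volume_Ioi_ofReal_lt (f x)

def concaveMajorant (f : X → ℝ≥0∞) (α : ℝ) (s : ℝ≥0∞) : ℝ≥0∞ :=
  ∫⁻ t in Ioi 0, distribution μ f t ^ α * min s (distribution μ f t)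

lemma concaveMajorant_mono (f : X → ℝ≥0∞) (α : ℝ) : Monotone (concaveMajorant μ f α) :=
  fun _ _ hss' => lintegral_mono fun _ => by gcongr

lemma concaveMajorant_mul_le (f : X → ℝ≥0∞) (α : ℝ) {s s' : ℝ≥0∞} (hs : s' ≤ s) :
    concaveMajorant μ f α s * s' ≤ concaveMajorant μ f α s' * s := by
  have hmeas := measurable_distribution μ f
  unfold concaveMajorant
  rw [← lintegral_mul_const _ (by fun_prop), ← lintegral_mul_const _ (by fun_prop)]
  refine lintegral_mono fun t => ?_
  set y := distribution μ f t
  have hmin : min s y * s' ≤ min s' y * s := by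
    rcases le_total y s' with hy | hy
    · rw [min_eq_right hy, min_eq_right (hy.trans hs)]; gcongr
    · rw [min_eq_left hy, mul_comm]; gcongr; exact min_le_left _ _
  rw [mul_assoc, mul_assoc]
  exact mul_le_mul_right hmin _

lemma concaveMajorant_one_le [IsProbabilityMeasure μ] {f : X → ℝ≥0∞} (hf : Measurable f)
    {α : ℝ} (hα : 0 ≤ α) : concaveMajorant μ f α 1 ≤ ∫⁻ x, f x ∂μ := by
  rw [← lintegral_distribution μ hf]
  refine lintegral_mono fun t => ?_
  calc distribution μ f t ^ α * min 1 (distribution μ f t) ≤ 1 * distribution μ f t := by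
        gcongr
        exacts [rpow_le_one prob_le_one hα, min_le_right _ _]
    _ = distribution μ f t := one_mul _

lemma tsum_pow_mul_concaveMajorant_le [IsProbabilityMeasure μ] {f : X → ℝ≥0∞} (hf : Measurable f)
    {β : ℝ} (hβ0 : 0 < β) (hβ1 : β < 1) :
    ∑' k, ((2 : ℝ≥0∞) ^ (1 - β)) ^ k * concaveMajorant μ f (1 - β) (2⁻¹ ^ k) ≤
      ((1 - ((2 : ℝ≥0∞) ^ (1 - β))⁻¹)⁻¹ + (1 - 2⁻¹ ^ β)⁻¹) * ∫⁻ x, f x ∂μ := by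
  have hmeas := measurable_distribution μ f
  set c : ℝ≥0∞ := (1 - ((2 : ℝ≥0∞) ^ (1 - β))⁻¹)⁻¹ + (1 - 2⁻¹ ^ β)⁻¹
  set y := distribution μ f
  have hg (s : ℝ≥0∞) : Measurable fun t => y t ^ (1 - β) * min s (y t) := by fun_prop
  calc ∑' k, ((2 : ℝ≥0∞) ^ (1 - β)) ^ k * concaveMajorant μ f (1 - β) (2⁻¹ ^ k)
      = ∫⁻ t in Ioi 0, ∑' k, (2 ^ (1 - β)) ^ k * (y t ^ (1 - β) * min (2⁻¹ ^ k) (y t)) := by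
        rw [lintegral_tsum fun k => by fun_prop]
        exact tsum_congr fun k => (lintegral_const_mul _ (hg _)).symm
    _ ≤ ∫⁻ t in Ioi 0, c * y t := lintegral_mono fun t => ?_
    _ = c * ∫⁻ x, f x ∂μ := by rw [lintegral_const_mul _ hmeas, lintegral_distribution μ hf]
  calc ∑' k, (2 ^ (1 - β)) ^ k * (y t ^ (1 - β) * min (2⁻¹ ^ k) (y t))
      = y t ^ (1 - β) * ∑' k, (2 ^ (1 - β)) ^ k * min (2⁻¹ ^ k) (y t) := by
        rw [← ENNReal.tsum_mul_left]; congr 1; ext k; ring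
    _ ≤ y t ^ (1 - β) * (c * y t ^ β) := by
        gcongr; exact tsum_pow_mul_min_le hβ0 hβ1 prob_le_one
    _ = c * y t := by
        rw [mul_left_comm, ← rpow_add_of_nonneg _ _ (by linarith) hβ0.le, sub_add_cancel,
          ENNReal.rpow_one]

lemma measure_lt_le_of_setLIntegral_le [IsFiniteMeasure μ] {f : X → ℝ≥0∞} (hf : Measurable f)
    {G : ℝ≥0∞ → ℝ≥0∞} (hfG : ∀ E, ∫⁻ x in E, f x ∂μ ≤ G (μ E))
    (hG : ∀ s s', s' ≤ s → G s * s' ≤ G s' * s) {r T : ℝ≥0∞} (hT : G r < T * r) :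
    μ {x | T < f x} ≤ r := by
  set s := μ {x | T < f x}
  by_contra! hrs
  have hs0 : s ≠ 0 := (zero_le.trans_lt hrs).ne'
  have hTs : T * s ≤ G s :=
    calc T * s = ∫⁻ _ in {x | T < f x}, T ∂μ := by rw [setLIntegral_const, mul_comm]
      _ ≤ ∫⁻ x in {x | T < f x}, f x ∂μ := setLIntegral_mono hf fun x hx => le_of_lt hx
      _ ≤ G s := hfG _
  have : T * r * s < T * r * s :=
    calc T * r * s = T * s * r := by ring
      _ ≤ G s * r := by gcongr
      _ ≤ G r * s := hG s r hrs.le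
      _ < T * r * s := by
          rw [mul_comm _ s, mul_comm _ s]
          exact ENNReal.mul_lt_mul_right hs0 (measure_ne_top μ _) hT
  exact lt_irrefl _ this

lemma lintegral_distribution_rpow_le [IsProbabilityMeasure μ] {f : X → ℝ≥0∞}
    (hf : Measurable f) {G : ℝ≥0∞ → ℝ≥0∞} (hfG : ∀ E, ∫⁻ x in E, f x ∂μ ≤ G (μ E))
    (hGmono : Monotone G) (hG : ∀ s s', s' ≤ s → G s * s' ≤ G s' * s) (hG1 : G 1 ≠ ⊤)
    {β : ℝ} (hβ : 0 < β) :
    ∫⁻ t in Ioi 0, distribution μ f t ^ β ≤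
      G 1 + 2 * ∑' k, ((2 : ℝ≥0∞) ^ (1 - β)) ^ k * G (2⁻¹ ^ k) := by
  set τ : ℕ → ℝ≥0∞ := fun k => 2 ^ k * G (2⁻¹ ^ k)
  have h2 : (2⁻¹ : ℝ≥0∞) ≤ 1 := ENNReal.inv_le_one.2 one_le_two
  have hτ (k : ℕ) : τ k ≠ ⊤ :=
    mul_ne_top (pow_ne_top ofNat_ne_top) (ne_top_of_le_ne_top hG1 (hGmono (pow_le_one₀ zero_le h2)))
  have hτG (k : ℕ) : τ k * 2⁻¹ ^ k = G (2⁻¹ ^ k) := by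
    rw [mul_comm, ← mul_assoc, ← mul_pow, ENNReal.inv_mul_cancel two_ne_zero ofNat_ne_top, one_pow,
      one_mul]
  have hσ : (2⁻¹ : ℝ≥0∞) ^ β < 1 := rpow_lt_one (ENNReal.inv_lt_one.2 one_lt_two) hβ
  have hσ2 : (2⁻¹ : ℝ≥0∞) ^ β * 2 = 2 ^ (1 - β) := by
    rw [ENNReal.inv_rpow, ← ENNReal.rpow_neg, sub_eq_neg_add,
      ENNReal.rpow_add _ _ two_ne_zero ofNat_ne_top, ENNReal.rpow_one]
  have hdist (k : ℕ) (t : ℝ) (ht : (τ k).toReal < t) : distribution μ f t ^ β ≤ (2⁻¹ ^ β) ^ k := by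
    rw [← pow_rpow_comm]
    refine rpow_le_rpow (measure_lt_le_of_setLIntegral_le μ hf hfG hG ?_) hβ.le
    rw [← hτG]
    exact ENNReal.mul_lt_mul_left (pow_ne_zero _ (by simp)) (pow_ne_top (by simp))
      ((lt_ofReal_iff_toReal_lt (hτ k)).2 ht)
  calc ∫⁻ t in Ioi 0, distribution μ f t ^ β
      ≤ ENNReal.ofReal (τ 0).toReal +
          ∑' k, (2⁻¹ ^ β) ^ k * ENNReal.ofReal (τ (k + 1)).toReal :=
        setLIntegral_Ioi_le_of_le_pow hσ (fun t => rpow_le_one prob_le_one hβ.le) hdist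
    _ ≤ G 1 + ∑' k, 2 * (2 ^ (1 - β)) ^ k * G (2⁻¹ ^ k) := by
        simp only [ofReal_toReal (hτ _)]
        refine add_le_add (by simp [τ]) (ENNReal.tsum_le_tsum fun k => ?_)
        calc (2⁻¹ ^ β) ^ k * (2 ^ (k + 1) * G (2⁻¹ ^ (k + 1)))
            ≤ (2⁻¹ ^ β) ^ k * (2 ^ (k + 1) * G (2⁻¹ ^ k)) := by
              gcongr
              exact hGmono (pow_le_pow_of_le_one zero_le h2 k.le_succ)
          _ = 2 * (2 ^ (1 - β)) ^ k * G (2⁻¹ ^ k) := by rw [← hσ2, mul_pow]; ring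
    _ = _ := by simp_rw [mul_assoc, ENNReal.tsum_mul_left]

end Distribution

lemma lorentzNorm_le_lintegral_distribution {X E : Type*} [MeasurableSpace X]
    [NormedAddCommGroup E] (μ : Measure X) {p : ℝ} (hp : 0 ≤ p) {g : X → E} {Ψ : X → ℝ≥0∞}
    (hgΨ : ∀ x, ‖g x‖ₑ ≤ Ψ x) :
    lorentzNorm μ p g ≤ ∫⁻ t in Ioi 0, distribution μ Ψ t ^ (1 / p) := by
  refine setLIntegral_mono' measurableSet_Ioi fun t ht => ?_
  refine rpow_le_rpow (measure_mono fun x hx => ?_) (by positivity)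
  calc ENNReal.ofReal t < ENNReal.ofReal ‖g x‖ := (ofReal_lt_ofReal_iff (ht.out.trans hx)).2 hx
    _ = ‖g x‖ₑ := ofReal_norm (g x)
    _ ≤ Ψ x := hgΨ x

variable {m : ℕ} {P : Measure (ℕ → Fin m)}

def extendWord [NeZero m] {n : ℕ} (w : Fin n → Fin m) : ℕ → Fin m :=
  fun i => if h : i < n then w ⟨i, h⟩ else 0

lemma AdaptedFun.measurable [NeZero m] {E : Type*} [MeasurableSpace E]
    {F : ℕ → (ℕ → Fin m) → E} (hF : AdaptedFun m F) (n : ℕ) : Measurable (F n) := by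
  have hfactor : F n = (fun w : Fin n → Fin m => F n (extendWord w)) ∘ fun x i => x i := by
    funext x
    exact hF n x _ fun i hi => by simp [extendWord, hi]
  rw [hfactor]
  exact (measurable_of_countable _).comp (measurable_pi_lambda _ fun i => measurable_pi_apply _)

lemma inv_pow_le_measure_of_adapted
    (hPcyl : ∀ (n : ℕ) (w : Fin n → Fin m), P (cyl m n w) = ((m : ℝ≥0∞))⁻¹ ^ n)
    {S : ℕ → Set (ℕ → Fin m)} (hS : AdaptedFun m fun n x => x ∈ S n) {n : ℕ} {x : ℕ → Fin m}
    (hx : x ∈ S n) : ((m : ℝ≥0∞))⁻¹ ^ n ≤ P (S n) := by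
  rw [← hPcyl n fun i => x i]
  exact measure_mono fun y hy => (hS n x y fun i hi => (hy ⟨i, hi⟩).symm).mp hx

lemma tsum_pow_mul_measure_inter_le
    (hPcyl : ∀ (n : ℕ) (w : Fin n → Fin m), P (cyl m n w) = ((m : ℝ≥0∞))⁻¹ ^ n)
    {α : ℝ} (hα : 0 ≤ α) {S : ℕ → Set (ℕ → Fin m)} (hS : AdaptedFun m fun n x => x ∈ S n)
    {Y : Set (ℕ → Fin m)} (hSY : ∀ n, S n ⊆ Y) (E : Set (ℕ → Fin m)) :
    ∑' n, ((m : ℝ≥0∞)⁻¹ ^ α) ^ n * P (S n ∩ E) ≤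
      (1 - (m : ℝ≥0∞)⁻¹ ^ α)⁻¹ * (P Y ^ α * min (P E) (P Y)) := by
  classical
  set ρ : ℝ≥0∞ := (m : ℝ≥0∞)⁻¹ ^ α
  by_cases hne : ∃ n, (S n).Nonempty
  swap
  · simp only [not_exists, not_nonempty_iff_eq_empty] at hne
    simp [hne]
  set n₀ := Nat.find hne
  obtain ⟨x₀, hx₀⟩ := Nat.find_spec hne
  have hρ : ρ ^ n₀ ≤ P Y ^ α := by
    rw [← pow_rpow_comm]
    exact rpow_le_rpow
      ((inv_pow_le_measure_of_adapted hPcyl hS hx₀).trans (measure_mono (hSY n₀))) hα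
  have hhead : ∑ n ∈ Finset.range n₀, ρ ^ n * P (S n ∩ E) = 0 := by
    refine Finset.sum_eq_zero fun n hn => ?_
    have hSn : S n = ∅ := not_nonempty_iff_eq_empty.1 (Nat.find_min hne (Finset.mem_range.1 hn))
    simp [hSn]
  rw [← ENNReal.summable.sum_add_tsum_nat_add' (k := n₀), hhead, zero_add]
  calc ∑' n, ρ ^ (n + n₀) * P (S (n + n₀) ∩ E)
      ≤ ∑' n, ρ ^ (n + n₀) * min (P E) (P Y) := by
        gcongr with n
        exact le_min (measure_mono inter_subset_right)
          (measure_mono (inter_subset_left.trans (hSY _)))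
    _ = ρ ^ n₀ * (1 - ρ)⁻¹ * min (P E) (P Y) := by rw [ENNReal.tsum_mul_right, tsum_pow_add]
    _ ≤ (1 - ρ)⁻¹ * (P Y ^ α * min (P E) (P Y)) := by
        rw [mul_comm (ρ ^ n₀), mul_assoc]; gcongr

lemma setLIntegral_tsum_pow_mul_le [NeZero m] [SFinite P]
    (hPcyl : ∀ (n : ℕ) (w : Fin n → Fin m), P (cyl m n w) = ((m : ℝ≥0∞))⁻¹ ^ n)
    {α : ℝ} (hα : 0 ≤ α) {Λ : ℕ → (ℕ → Fin m) → ℝ≥0∞} (hΛ : AdaptedFun m Λ)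
    (E : Set (ℕ → Fin m)) :
    ∫⁻ x in E, ∑' n, ((m : ℝ≥0∞)⁻¹ ^ α) ^ n * Λ n x ∂P ≤
      (1 - (m : ℝ≥0∞)⁻¹ ^ α)⁻¹ * concaveMajorant P (fun x => ⨆ n, Λ n x) α (P E) := by
  set ρ : ℝ≥0∞ := (m : ℝ≥0∞)⁻¹ ^ α
  set M : (ℕ → Fin m) → ℝ≥0∞ := fun x => ⨆ n, Λ n x
  have hM := measurable_distribution P M
  have hlevel (t : ℝ) : ∑' n, ρ ^ n * distribution (P.restrict E) (Λ n) t ≤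
      (1 - ρ)⁻¹ * (distribution P M t ^ α * min (P E) (distribution P M t)) := by
    simp only [distribution,
      Measure.restrict_apply (measurableSet_lt measurable_const (hΛ.measurable _))]
    exact tsum_pow_mul_measure_inter_le hPcyl hα (S := fun n => {x | ENNReal.ofReal t < Λ n x})
      (fun n x y hxy => by
        show (ENNReal.ofReal t < Λ n x) = (ENNReal.ofReal t < Λ n y); rw [hΛ n x y hxy])
      (fun n x hx => hx.trans_le (le_iSup (fun n => Λ n x) n)) E
  calc ∫⁻ x in E, ∑' n, ρ ^ n * Λ n x ∂P
      = ∑' n, ρ ^ n * ∫⁻ t in Ioi 0, distribution (P.restrict E) (Λ n) t := by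
        rw [lintegral_tsum fun n => ((hΛ.measurable n).const_mul _).aemeasurable]
        simp_rw [lintegral_const_mul _ (hΛ.measurable _),
          lintegral_distribution _ (hΛ.measurable _)]
    _ = ∫⁻ t in Ioi 0, ∑' n, ρ ^ n * distribution (P.restrict E) (Λ n) t := by
        rw [lintegral_tsum fun n => ((measurable_distribution _ _).const_mul _).aemeasurable]
        simp_rw [lintegral_const_mul _ (measurable_distribution _ _)]
    _ ≤ ∫⁻ t in Ioi 0, (1 - ρ)⁻¹ * (distribution P M t ^ α * min (P E) (distribution P M t)) :=
        lintegral_mono hlevel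
    _ = (1 - ρ)⁻¹ * concaveMajorant P M α (P E) := lintegral_const_mul _ (by fun_prop)

theorem exists_lintegral_distribution_tsum_le (hm : 2 ≤ m) [IsProbabilityMeasure P]
    (hPcyl : ∀ (n : ℕ) (w : Fin n → Fin m), P (cyl m n w) = ((m : ℝ≥0∞))⁻¹ ^ n)
    {β : ℝ} (hβ0 : 0 < β) (hβ1 : β < 1) :
    ∃ C : ℝ≥0, ∀ Λ : ℕ → (ℕ → Fin m) → ℝ≥0∞, AdaptedFun m Λ → ∫⁻ x, ⨆ n, Λ n x ∂P ≠ ⊤ →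
      ∫⁻ t in Ioi 0,
          distribution P (fun x => ∑' n, ((m : ℝ≥0∞)⁻¹ ^ (1 - β)) ^ n * Λ n x) t ^ β ≤
        C * ∫⁻ x, ⨆ n, Λ n x ∂P := by
  have : NeZero m := ⟨by omega⟩
  set ρ : ℝ≥0∞ := (m : ℝ≥0∞)⁻¹ ^ (1 - β)
  set c : ℝ≥0∞ := (1 - ((2 : ℝ≥0∞) ^ (1 - β))⁻¹)⁻¹ + (1 - 2⁻¹ ^ β)⁻¹
  have hρ : (1 - ρ)⁻¹ ≠ ⊤ := inv_ne_top.2 (tsub_pos_of_lt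
    (rpow_lt_one (ENNReal.inv_lt_one.2 (by exact_mod_cast hm)) (by linarith))).ne'
  have hc : c ≠ ⊤ := add_ne_top.2
    ⟨inv_ne_top.2 (tsub_pos_of_lt (ENNReal.inv_lt_one.2
        (one_lt_rpow one_lt_two (by linarith)))).ne',
      inv_ne_top.2 (tsub_pos_of_lt (rpow_lt_one (ENNReal.inv_lt_one.2 one_lt_two) hβ0)).ne'⟩
  refine ⟨((1 - ρ)⁻¹ * (1 + 2 * c)).toNNReal, fun Λ hΛ hM => ?_⟩
  rw [coe_toNNReal (mul_ne_top hρ (by finiteness))]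
  set M : (ℕ → Fin m) → ℝ≥0∞ := fun x => ⨆ n, Λ n x
  have hMmeas : Measurable M := Measurable.iSup hΛ.measurable
  set G : ℝ≥0∞ → ℝ≥0∞ := fun s => (1 - ρ)⁻¹ * concaveMajorant P M (1 - β) s
  have hG1 : G 1 ≤ (1 - ρ)⁻¹ * ∫⁻ x, M x ∂P :=
    mul_le_mul_right (concaveMajorant_one_le P hMmeas (by linarith)) _
  have hGsum : ∑' k, ((2 : ℝ≥0∞) ^ (1 - β)) ^ k * G (2⁻¹ ^ k) ≤
      (1 - ρ)⁻¹ * (c * ∫⁻ x, M x ∂P) := by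
    simp_rw [G, mul_left_comm _ (1 - ρ)⁻¹, ENNReal.tsum_mul_left]
    gcongr
    exact tsum_pow_mul_concaveMajorant_le P hMmeas hβ0 hβ1
  calc _ ≤ G 1 + 2 * ∑' k, ((2 : ℝ≥0∞) ^ (1 - β)) ^ k * G (2⁻¹ ^ k) :=
        lintegral_distribution_rpow_le P
          (Measurable.tsum fun n => (hΛ.measurable n).const_mul _)
          (setLIntegral_tsum_pow_mul_le hPcyl (by linarith) hΛ)
          (fun s s' h => mul_le_mul_right (concaveMajorant_mono P M _ h) _)
          (fun s s' h => by
            simp only [mul_assoc]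
            exact mul_le_mul_right (concaveMajorant_mul_le P M _ h) _)
          (ne_top_of_le_ne_top (mul_ne_top hρ hM) hG1) hβ0
    _ ≤ (1 - ρ)⁻¹ * ∫⁻ x, M x ∂P + 2 * ((1 - ρ)⁻¹ * (c * ∫⁻ x, M x ∂P)) := by gcongr
    _ = (1 - ρ)⁻¹ * (1 + 2 * c) * ∫⁻ x, M x ∂P := by ring

lemma AdaptedFun.enorm_sub_pred {E : Type*} [SeminormedAddCommGroup E]
    {F : ℕ → (ℕ → Fin m) → E} (hF : AdaptedFun m F) :
    AdaptedFun m fun n x => ‖F n x - F (n - 1) x‖ₑ := fun n x y hxy => by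
  simp only [hF n x y hxy, hF (n - 1) x y fun i hi => hxy i (by omega)]

lemma iSup_enorm_sub_pred_le {E : Type*} [SeminormedAddCommGroup E] (F : ℕ → E) :
    ⨆ n, ‖F n - F (n - 1)‖ₑ ≤ 2 * ⨆ n, ‖F n‖ₑ :=
  iSup_le fun n => enorm_sub_le.trans <| (two_mul (⨆ n, ‖F n‖ₑ)).symm ▸
    add_le_add (le_iSup (fun n => ‖F n‖ₑ) n) (le_iSup (fun n => ‖F n‖ₑ) (n - 1))

lemma enorm_rieszSum_le [NeZero m] {E : Type*} [NormedAddCommGroup E] [NormedSpace ℝ E]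
    (α : ℝ) (F : ℕ → (ℕ → Fin m) → E) (N : ℕ) (x : ℕ → Fin m) :
    ‖rieszSum m α F N x‖ₑ ≤ ∑' n, ((m : ℝ≥0∞)⁻¹ ^ α) ^ n * ‖F n x - F (n - 1) x‖ₑ := by
  have hcoef (n : ℕ) : ‖(m : ℝ) ^ (-(α * n))‖ₑ = ((m : ℝ≥0∞)⁻¹ ^ α) ^ n := by
    rw [Real.enorm_eq_ofReal (by positivity), ← ofReal_rpow_of_pos (by simp [Nat.pos_of_neZero]),
      ofReal_natCast, ENNReal.rpow_neg, ← ENNReal.inv_rpow, ENNReal.rpow_mul_natCast]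
  calc ‖rieszSum m α F N x‖ₑ
      ≤ ∑ n ∈ Finset.Icc 1 N, ‖((m : ℝ) ^ (-(α * n)) : ℝ) • (F n x - F (n - 1) x)‖ₑ :=
        enorm_sum_le _ _
    _ = ∑ n ∈ Finset.Icc 1 N, ((m : ℝ≥0∞)⁻¹ ^ α) ^ n * ‖F n x - F (n - 1) x‖ₑ := by
        simp_rw [enorm_smul, hcoef]
    _ ≤ _ := ENNReal.sum_le_tsum _

end MartingaleModel

/-- **`I_{(p-1)/p}` maps the martingale Hardy space `H_1` into the Lorentz space
`L_{p,1}`.** For every `p ∈ (1,∞)` there is `C = C(m,p)` such that every real-valued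
martingale `F` adapted to the `m`-adic filtration with `E[sup_n |F_n|] < ∞` satisfies
`‖∑_{n=1}^N m^{-((p-1)/p)n} f_n‖_{L_{p,1}(P)} ≤ C · E[sup_n |F_n|]` for every `N ≥ 1`. -/
theorem riesz_potential_H1_to_Lorentz (m : ℕ) (hm : 3 ≤ m)
    (P : Measure (ℕ → Fin m)) (hP : IsProbabilityMeasure P)
    (hPcyl : ∀ (n : ℕ) (w : Fin n → Fin m), P (cyl m n w) = ((m : ℝ≥0∞))⁻¹ ^ n)
    (p : ℝ) (hp : 1 < p) :
    ∃ C : ℝ≥0, ∀ F : ℕ → (ℕ → Fin m) → ℝ, IsMartingaleFun m F →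
      (∫⁻ x, (⨆ n, (‖F n x‖₊ : ℝ≥0∞)) ∂P) < ⊤ →
      ∀ N, 1 ≤ N →
        lorentzNorm P p (rieszSum m ((p - 1) / p) F N) ≤
          C * ∫⁻ x, (⨆ n, (‖F n x‖₊ : ℝ≥0∞)) ∂P := by
  have : NeZero m := ⟨by omega⟩
  have hβ0 : 0 < 1 / p := by positivity
  have hβ1 : 1 / p < 1 := by rw [div_lt_one (by linarith)]; exact hp
  obtain ⟨C, hC⟩ := exists_lintegral_distribution_tsum_le (by omega) hPcyl hβ0 hβ1
  refine ⟨2 * C, fun F hF hFint N _ => ?_⟩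
  set Λ : ℕ → (ℕ → Fin m) → ℝ≥0∞ := fun n x => ‖F n x - F (n - 1) x‖ₑ
  have hΛF : ∫⁻ x, ⨆ n, Λ n x ∂P ≤ 2 * ∫⁻ x, ⨆ n, (‖F n x‖₊ : ℝ≥0∞) ∂P := by
    rw [← lintegral_const_mul' _ _ ofNat_ne_top]
    exact lintegral_mono fun x => iSup_enorm_sub_pred_le (F · x)
  have hα : (p - 1) / p = 1 - 1 / p := by field_simp
  calc lorentzNorm P p (rieszSum m ((p - 1) / p) F N)
      ≤ ∫⁻ t in Ioi 0,
          distribution P (fun x => ∑' n, ((m : ℝ≥0∞)⁻¹ ^ (1 - 1 / p)) ^ n * Λ n x) t ^ (1 / p) :=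
        lorentzNorm_le_lintegral_distribution P (by linarith) fun x =>
          hα ▸ enorm_rieszSum_le _ F N x
    _ ≤ C * ∫⁻ x, ⨆ n, Λ n x ∂P :=
        hC Λ hF.1.enorm_sub_pred (ne_top_of_le_ne_top (by finiteness) hΛF)
    _ ≤ C * (2 * ∫⁻ x, ⨆ n, (‖F n x‖₊ : ℝ≥0∞) ∂P) := by gcongr
    _ = ↑(2 * C) * ∫⁻ x, ⨆ n, (‖F n x‖₊ : ℝ≥0∞) ∂P := by push_cast; ring
end
end

section
/- The subspace W satisfies the second structural condition if and only if κ(θ) < (1−θ)·log m for every θ ∈ [0,1) (equivalently, κ(1/p) < ((p−1)/p)·log m for every p ∈ (1,∞]). -/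
open MeasureTheory ENNReal NNReal

noncomputable section

namespace MartingaleModel

/-- The second structural condition: `W` contains no nonzero vector `v ⊗ a` in which
`v` has `m - 1` equal coordinates. -/
def SecondStructural (m l : ℕ) (W : Submodule ℝ (Fin m → EuclideanSpace ℝ (Fin l))) : Prop :=
  ∀ (v : Fin m → ℝ) (a : EuclideanSpace ℝ (Fin l)),
    (∑ j, v j = 0) → (∃ j₀ c, ∀ j, j ≠ j₀ → v j = c) →
    (fun j => v j • a) ∈ W → (fun j => v j • a) = 0

/-- The admissible set of vectors `v ∈ V` appearing in the definition of `κ`: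
`∑ v_j = 0`, `v_j ≥ -1` for all `j`, and `v ⊗ a ∈ W` for some `a ≠ 0`. -/
def kappaSet (m l : ℕ) (W : Submodule ℝ (Fin m → EuclideanSpace ℝ (Fin l))) :
    Set (Fin m → ℝ) :=
  {v | (∑ j, v j = 0) ∧ (∀ j, -1 ≤ v j) ∧
    ∃ a : EuclideanSpace ℝ (Fin l), a ≠ 0 ∧ (fun j => v j • a) ∈ W}

/-- The function `κ`: for `θ ∈ (0,1]`,
`κ(θ) = sup { θ·log((1/m)·∑_j |1+v_j|^{1/θ}) }` over the admissible set, and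
`κ(0) = sup { log (max_j (1+v_j)) }` over the same set. -/
def kappa (m l : ℕ) (W : Submodule ℝ (Fin m → EuclideanSpace ℝ (Fin l))) (θ : ℝ) : ℝ :=
  if θ = 0 then
    sSup ((fun v : Fin m → ℝ => Real.log (⨆ j : Fin m, (1 + v j))) '' kappaSet m l W)
  else
    sSup ((fun v : Fin m → ℝ =>
      θ * Real.log ((1 / m) * ∑ j : Fin m, |1 + v j| ^ (1 / θ))) '' kappaSet m l W)

end MartingaleModel

open MartingaleModel

/-!
Write `x = 1 + v`. Admissible vectors are the nonnegative `x` with `∑ x_j = m`, so `x_j ≤ m`, with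
equality only for `x = m e_{j₀}`, i.e. `v = m e_{j₀} - 1`, which has `m - 1` equal coordinates and
spans every line `ℝ v` with that property. Hence the second structural condition says exactly that
`max_j x_j < m` on the admissible set. Since `(1/m) ∑ x_j^p ≤ (max_j x_j)^{p-1}`, the quantity
maximised in `κ(θ)` is at most `(1 - θ) log (max_j x_j)`, with equality at `θ = 0`. The admissible
set is compact, which turns the pointwise bound `max_j x_j < m` into a uniform one and so gives
`κ(θ) < (1 - θ) log m`; conversely `κ(0) < log m` forces `max_j x_j < m`.
-/

open Finset

section Admissible

variable {ι : Type*} [Fintype ι] {v : ι → ℝ}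

lemma sum_one_add_eq_card (hsum : ∑ i, v i = 0) : ∑ i, (1 + v i) = Fintype.card ι := by
  simp [Finset.sum_add_distrib, hsum]

lemma one_add_le_card (hsum : ∑ i, v i = 0) (hv : ∀ i, -1 ≤ v i) (j : ι) :
    1 + v j ≤ Fintype.card ι := by
  rw [← sum_one_add_eq_card hsum]
  exact Finset.single_le_sum (f := fun i => 1 + v i) (fun i _ => by linarith [hv i]) (mem_univ j)

lemma eq_neg_one_of_card_le_one_add (hsum : ∑ i, v i = 0) (hv : ∀ i, -1 ≤ v i) {j : ι}
    (hj : (Fintype.card ι : ℝ) ≤ 1 + v j) {i : ι} (hij : i ≠ j) : v i = -1 := by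
  classical
  have hnonneg : ∀ k ∈ univ.erase j, 0 ≤ 1 + v k := fun k _ => by linarith [hv k]
  have hrest : ∑ k ∈ univ.erase j, (1 + v k) = 0 := by
    have hsplit := Finset.add_sum_erase univ (fun k => 1 + v k) (mem_univ j)
    rw [sum_one_add_eq_card hsum] at hsplit
    exact le_antisymm (by linarith) (Finset.sum_nonneg hnonneg)
  have := (Finset.sum_eq_zero_iff_of_nonneg hnonneg).1 hrest i (mem_erase.2 ⟨hij, mem_univ i⟩)
  linarith

lemma exists_nonneg_of_sum_eq_zero [Nonempty ι] (hsum : ∑ i, v i = 0) : ∃ j, 0 ≤ v j := by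
  obtain ⟨j, -, hj⟩ := Finset.exists_le_of_sum_le univ_nonempty (f := 0) (g := v) (by simp [hsum])
  exact ⟨j, hj⟩

lemma one_le_iSup_one_add [Nonempty ι] (hsum : ∑ i, v i = 0) : 1 ≤ ⨆ i, (1 + v i) := by
  obtain ⟨j, hj⟩ := exists_nonneg_of_sum_eq_zero hsum
  exact (le_add_of_nonneg_right hj).trans
    (le_ciSup (f := fun i => 1 + v i) (Finite.bddAbove_range _) j)

lemma iSup_one_add_le_card [Nonempty ι] (hsum : ∑ i, v i = 0) (hv : ∀ i, -1 ≤ v i) :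
    ⨆ i, (1 + v i) ≤ Fintype.card ι :=
  ciSup_le (one_add_le_card hsum hv)

lemma isCompact_setOf_sum_eq_zero_neg_one_le :
    IsCompact {v : ι → ℝ | ∑ i, v i = 0 ∧ ∀ i, -1 ≤ v i} := by
  refine (isCompact_Icc (a := fun _ => -1) (b := fun _ => (Fintype.card ι : ℝ))).of_isClosed_subset
    ?_ fun v hv => ⟨hv.2, fun i => by linarith [one_add_le_card hv.1 hv.2 i]⟩
  simp only [Set.ofPred_and, Set.ofPred_forall]
  exact (isClosed_eq (by fun_prop) continuous_const).inter
    (isClosed_iInter fun i => isClosed_le continuous_const (continuous_apply i))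

end Admissible

lemma sum_rpow_le_rpow_mul_sum {ι : Type*} [Fintype ι] {x : ι → ℝ} {M p : ℝ}
    (hx : ∀ i, 0 ≤ x i) (hxM : ∀ i, x i ≤ M) (hp : 1 ≤ p) :
    ∑ i, x i ^ p ≤ M ^ (p - 1) * ∑ i, x i := by
  rw [Finset.mul_sum]
  refine Finset.sum_le_sum fun i _ => ?_
  calc x i ^ p = x i ^ (p - 1) * x i := by
        rw [← Real.rpow_add_one' (hx i) (by linarith), sub_add_cancel]
    _ ≤ M ^ (p - 1) * x i :=
        mul_le_mul_of_nonneg_right (Real.rpow_le_rpow (hx i) (hxM i) (by linarith)) (hx i)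

lemma continuous_ciSup_of_fintype {ι X L : Type*} [Fintype ι] [Nonempty ι] [TopologicalSpace X]
    [ConditionallyCompleteLattice L] [TopologicalSpace L] [ContinuousSup L] {f : ι → X → L}
    (hf : ∀ i, Continuous (f i)) : Continuous fun x => ⨆ i, f i x := by
  simp_rw [← Finset.sup'_univ_eq_ciSup]
  exact Continuous.finset_sup'_apply _ fun i _ => hf i

lemma Real.sSup_lt_of_forall_le {s : Set ℝ} {a b : ℝ} (h : ∀ x ∈ s, x ≤ a) (hab : a < b)
    (hb : 0 < b) : sSup s < b :=
  (Real.sSup_le (fun x hx => (h x hx).trans (le_max_left a 0)) (le_max_right a 0)).trans_lt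
    (max_lt hab hb)

lemma mul_log_mean_rpow_le {ι : Type*} [Fintype ι] [Nonempty ι] {v : ι → ℝ}
    (hsum : ∑ i, v i = 0) (hv : ∀ i, -1 ≤ v i) {θ : ℝ} (hθ0 : 0 < θ) (hθ1 : θ < 1) :
    θ * Real.log ((1 / Fintype.card ι) * ∑ i, |1 + v i| ^ (1 / θ)) ≤
      (1 - θ) * Real.log (⨆ i, (1 + v i)) := by
  set M := ⨆ i, (1 + v i)
  have hM : 1 ≤ M := one_le_iSup_one_add hsum
  have hx : ∀ i, 0 ≤ 1 + v i := fun i => by linarith [hv i]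
  simp_rw [abs_of_nonneg (hx _)]
  have hmean_le : (1 / Fintype.card ι) * ∑ i, (1 + v i) ^ (1 / θ) ≤ M ^ (1 / θ - 1) := by
    have hp : 1 ≤ 1 / θ := by rw [le_div_iff₀ hθ0]; linarith
    calc _ ≤ (1 / Fintype.card ι) * (M ^ (1 / θ - 1) * ∑ i, (1 + v i)) := by
          gcongr
          exact sum_rpow_le_rpow_mul_sum hx
            (le_ciSup (f := fun i => 1 + v i) (Finite.bddAbove_range _)) hp
      _ = M ^ (1 / θ - 1) := by rw [sum_one_add_eq_card hsum]; field_simp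
  have hmean_pos : 0 < (1 / Fintype.card ι) * ∑ i, (1 + v i) ^ (1 / θ) := by
    obtain ⟨j, hj⟩ := exists_nonneg_of_sum_eq_zero hsum
    have hsum_pos : 0 < ∑ i, (1 + v i) ^ (1 / θ) :=
      Finset.sum_pos' (fun i _ => Real.rpow_nonneg (hx i) _)
        ⟨j, mem_univ j, Real.rpow_pos_of_pos (by linarith) _⟩
    positivity
  calc _ ≤ θ * Real.log (M ^ (1 / θ - 1)) := by gcongr
    _ = (1 - θ) * Real.log M := by
      rw [Real.log_rpow (by linarith), ← mul_assoc, mul_sub, mul_one_div_cancel hθ0.ne', mul_one]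

lemma exists_lt_log_card_forall_log_iSup_le {ι : Type*} [Fintype ι] [Nonempty ι]
    {K : Set (ι → ℝ)} (hK : IsCompact K) (hsum : ∀ v ∈ K, ∑ i, v i = 0)
    (hlt : ∀ v ∈ K, ∀ j, 1 + v j < Fintype.card ι) :
    ∃ c < Real.log (Fintype.card ι), ∀ v ∈ K, Real.log (⨆ i, (1 + v i)) ≤ c := by
  have hpeak_pos : ∀ v ∈ K, 0 < ⨆ i, (1 + v i) := fun v hv =>
    one_pos.trans_le (one_le_iSup_one_add (hsum v hv))
  have hcont : ContinuousOn (fun v : ι → ℝ => -Real.log (⨆ i, (1 + v i))) K :=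
    ((continuous_ciSup_of_fintype fun i => by fun_prop).continuousOn.log
      fun v hv => (hpeak_pos v hv).ne').neg
  obtain ⟨c, hc, hle⟩ := hK.exists_forall_le' hcont (a := -Real.log (Fintype.card ι))
    fun v hv => by
      obtain ⟨j, hj⟩ := exists_eq_ciSup_of_finite (f := fun i => 1 + v i)
      exact neg_lt_neg (Real.log_lt_log (hpeak_pos v hv) (hj ▸ hlt v hv j))
  exact ⟨-c, by linarith, fun v hv => by linarith [hle v hv]⟩

section KappaSet

variable {m l : ℕ} {W : Submodule ℝ (Fin m → EuclideanSpace ℝ (Fin l))}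

lemma kappaSet_eq_image_fst :
    kappaSet m l W = Prod.fst '' ({v : Fin m → ℝ | ∑ j, v j = 0 ∧ ∀ j, -1 ≤ v j} ×ˢ
      Metric.sphere 0 1 ∩ {p | (fun j => p.1 j • p.2) ∈ W}) := by
  ext v
  constructor
  · rintro ⟨hsum, hv, a, ha, haW⟩
    refine ⟨(v, ‖a‖⁻¹ • a), ⟨⟨⟨hsum, hv⟩, ?_⟩, ?_⟩, rfl⟩
    · simp [norm_smul, ha]
    · change (fun j => v j • ‖a‖⁻¹ • a) ∈ W
      convert W.smul_mem ‖a‖⁻¹ haW using 1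
      funext j
      exact smul_comm _ _ _
  · rintro ⟨⟨v, a⟩, ⟨⟨⟨hsum, hv⟩, ha⟩, haW⟩, rfl⟩
    exact ⟨hsum, hv, a, ne_zero_of_mem_unit_sphere ⟨a, ha⟩, haW⟩

lemma isCompact_kappaSet : IsCompact (kappaSet m l W) := by
  rw [kappaSet_eq_image_fst]
  refine ((isCompact_setOf_sum_eq_zero_neg_one_le.prod (isCompact_sphere 0 1)).inter_right ?_).image
    continuous_fst
  exact W.closed_of_finiteDimensional.preimage (continuous_pi fun j => by fun_prop)

lemma kappa_lt_of_forall_log_iSup_le (hm : 2 ≤ m) {c : ℝ} (hc : c < Real.log m)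
    (h : ∀ v ∈ kappaSet m l W, Real.log (⨆ j, (1 + v j)) ≤ c) {θ : ℝ}
    (hθ : θ ∈ Set.Ico (0 : ℝ) 1) : kappa m l W θ < (1 - θ) * Real.log m := by
  have : Nonempty (Fin m) := ⟨⟨0, by omega⟩⟩
  have hlog_pos : 0 < Real.log m := Real.log_pos (by exact_mod_cast hm)
  have hθ' : 0 < 1 - θ := by linarith [hθ.2]
  rw [kappa]
  split_ifs with hθ0
  · subst hθ0
    simp only [sub_zero, one_mul]
    exact Real.sSup_lt_of_forall_le (by rintro _ ⟨v, hv, rfl⟩; exact h v hv) hc hlog_pos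
  · refine Real.sSup_lt_of_forall_le ?_ (mul_lt_mul_of_pos_left hc hθ') (by positivity)
    rintro _ ⟨v, hv, rfl⟩
    calc _ ≤ (1 - θ) * Real.log (⨆ j, (1 + v j)) := by
          simpa using mul_log_mean_rpow_le hv.1 hv.2.1 (lt_of_le_of_ne hθ.1 (Ne.symm hθ0)) hθ.2
      _ ≤ (1 - θ) * c := mul_le_mul_of_nonneg_left (h v hv) hθ'.le

lemma secondStructural_iff_forall_one_add_lt (hm : 2 ≤ m) :
    SecondStructural m l W ↔ ∀ v ∈ kappaSet m l W, ∀ j, 1 + v j < m := by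
  constructor
  · rintro hW v ⟨hsum, hv, a, ha, haW⟩ j
    by_contra! hj
    have hrest : ∀ i ≠ j, v i = -1 := fun i hij =>
      eq_neg_one_of_card_le_one_add hsum hv (by simpa using hj) hij
    have hvj : v j ≠ 0 := by
      have : (2 : ℝ) ≤ m := by exact_mod_cast hm
      linarith
    exact ha ((smul_eq_zero.1 (congrFun (hW v a hsum ⟨j, -1, hrest⟩ haW) j)).resolve_left hvj)
  · intro h v a hsum ⟨j₀, c, hc⟩ haW
    by_contra hva
    -- `v = -c • w` for the extremal vector `w = (-1, …, m - 1, …, -1)`, which has `1 + w j₀ = m`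
    set w : Fin m → ℝ := fun i => (if i = j₀ then (m : ℝ) else 0) - 1
    have hvj₀ : v j₀ - c = -(m * c) := by
      have := Finset.sum_eq_single_of_mem (f := fun i => v i - c) j₀ (mem_univ _)
        fun i _ hi => sub_eq_zero.2 (hc i hi)
      simpa [Finset.sum_sub_distrib, hsum] using this.symm
    have hwa : (fun i => w i • (-c • a)) = fun i => v i • a := by
      funext i
      rw [smul_smul]
      congr 1
      by_cases hi : i = j₀
      · simp only [w, hi, if_true]; linarith
      · simp [w, hi, hc i hi]
    have hca : -c • a ≠ 0 := fun h0 => hva (by rw [← hwa, h0]; exact funext fun i => smul_zero _)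
    have hw : w ∈ kappaSet m l W :=
      ⟨by simp [w, Finset.sum_sub_distrib], fun i => by simp only [w]; split_ifs <;> simp,
        -c • a, hca, hwa ▸ haW⟩
    exact (h w hw j₀).ne (by simp [w])

lemma forall_one_add_lt_of_kappa_zero_lt (hm : 2 ≤ m) (hκ : kappa m l W 0 < Real.log m) :
    ∀ v ∈ kappaSet m l W, ∀ j, 1 + v j < m := by
  have : Nonempty (Fin m) := ⟨⟨0, by omega⟩⟩
  have hpeak_pos : ∀ u ∈ kappaSet m l W, 0 < ⨆ i, (1 + u i) := fun u hu =>
    one_pos.trans_le (one_le_iSup_one_add hu.1)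
  rw [kappa, if_pos rfl] at hκ
  have hbdd : BddAbove ((fun u : Fin m → ℝ => Real.log (⨆ i, (1 + u i))) '' kappaSet m l W) := by
    refine ⟨Real.log m, ?_⟩
    rintro _ ⟨u, hu, rfl⟩
    exact Real.log_le_log (hpeak_pos u hu) (by simpa using iSup_one_add_le_card hu.1 hu.2.1)
  intro v hv j
  have hlog : Real.log (⨆ i, (1 + v i)) < Real.log m := (le_csSup hbdd ⟨v, hv, rfl⟩).trans_lt hκ
  calc 1 + v j ≤ ⨆ i, (1 + v i) := le_ciSup (f := fun i => 1 + v i) (Finite.bddAbove_range _) j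
    _ < m := (Real.log_lt_log_iff (hpeak_pos v hv) (by positivity)).1 hlog

end KappaSet

theorem secondStructural_iff_kappa_lt_general (m l : ℕ) (hm : 3 ≤ m)
    (W : Submodule ℝ (Fin m → EuclideanSpace ℝ (Fin l))) :
    SecondStructural m l W ↔
      ∀ θ ∈ Set.Ico (0 : ℝ) 1, kappa m l W θ < (1 - θ) * Real.log m := by
  have hm2 : 2 ≤ m := by omega
  have : Nonempty (Fin m) := ⟨⟨0, by omega⟩⟩
  rw [secondStructural_iff_forall_one_add_lt hm2]
  constructor
  · intro h θ hθ
    obtain ⟨c, hc, hle⟩ := exists_lt_log_card_forall_log_iSup_le isCompact_kappaSet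
      (fun v hv => hv.1) (by simpa using h)
    exact kappa_lt_of_forall_log_iSup_le hm2 (by simpa using hc) hle hθ
  · intro h
    exact forall_one_add_lt_of_kappa_zero_lt hm2 (by simpa using h 0 ⟨le_rfl, one_pos⟩)

/-- **Remark (the second structural condition via `κ`).** The subspace `W` satisfies
the second structural condition if and only if `κ(θ) < (1-θ)·log m` for every
`θ ∈ [0,1)` (equivalently `κ(1/p) < ((p-1)/p)·log m` for every `p ∈ (1,∞]`). -/
theorem secondStructural_iff_kappa_lt (m l : ℕ) (hm : 3 ≤ m) (hl : 1 ≤ l)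
    (W : Submodule ℝ (Fin m → EuclideanSpace ℝ (Fin l)))
    (hWV : ∀ b ∈ W, ∑ j : Fin m, b j = 0) :
    SecondStructural m l W ↔
      ∀ θ ∈ Set.Ico (0 : ℝ) 1, kappa m l W θ < (1 - θ) * Real.log m :=
  secondStructural_iff_kappa_lt_general m l hm W
end
end

section
/- Let W be the translation-invariant subspace determined by the subspaces (W_γ)_{γ ∈ Ĝ∖{1}}. Then W satisfies the first structural condition (i.e., W contains no nonzero function of the form v⊗a with v : G → ℝ real-valued, Σ_x v(x) = 0, and a ∈ ℂ^ℓ) if and only if W_γ ∩ W_{γ⁻¹} = {0} for every γ ∈ Ĝ∖{1}. -/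
/-! For real `v`, the Fourier coefficients of `v` satisfy `v̂(γ⁻¹) = conj v̂(γ)`. Hence if
`v ⊗ a ∈ W` and `v̂(γ) ≠ 0` for some `γ ≠ 1`, then `a` itself lies in `W_γ ∩ W_{γ⁻¹}`; when these
intersections vanish, `a ≠ 0` forces every Fourier coefficient of `v` to vanish (at `γ = 1` by
the zero mean), so `v = 0` by Fourier uniqueness. Conversely, for `u ∈ W_γ ∩ W_{γ⁻¹}` the function
`(γ + γ⁻¹) ⊗ u = 2 Re γ ⊗ u` lies in `W`, its only nonzero Fourier coefficients sitting at `γ`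
and `γ⁻¹`; it vanishes only if `u = 0`. -/

open ENNReal NNReal

noncomputable section

namespace MartingaleModel

/-- The Fourier coefficient `f̂(γ) = ∑_{x ∈ G} γ(x)⁻¹ · f(x)` of a function
`f : G → ℂ^ℓ` at a character `γ` of the finite abelian group `G`. -/
def fhat {G : Type*} [CommGroup G] [Fintype G] {l : ℕ}
    (f : G → EuclideanSpace ℂ (Fin l)) (γ : G →* ℂˣ) : EuclideanSpace ℂ (Fin l) :=
  ∑ x : G, (((γ x)⁻¹ : ℂˣ) : ℂ) • f x

/-- Membership in the translation-invariant space `W` determined by the subspaces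
`W_γ`, `γ ∈ Ĝ \ {1}`: zero mean and `f̂(γ) ∈ W_γ` for every nontrivial character. -/
def MemWChar {G : Type*} [CommGroup G] [Fintype G] {l : ℕ}
    (Wγ : (G →* ℂˣ) → Submodule ℂ (EuclideanSpace ℂ (Fin l)))
    (f : G → EuclideanSpace ℂ (Fin l)) : Prop :=
  (∑ x : G, f x = 0) ∧ ∀ γ : G →* ℂˣ, γ ≠ 1 → fhat f γ ∈ Wγ γ

end MartingaleModel

open MartingaleModel

open Complex ComplexConjugate

section CharacterSums

variable {G R : Type*} [Group G] [Fintype G] [CommRing R] [IsDomain R]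

theorem sum_units_coe_eq_zero {χ : G →* Rˣ} (hχ : χ ≠ 1) : ∑ x, (χ x : R) = 0 :=
  sum_hom_units_eq_zero ((Units.coeHom R).comp χ) fun h =>
    hχ <| MonoidHom.ext fun x => Units.ext <| DFunLike.congr_fun h x

theorem sum_units_coe [DecidableEq (G →* Rˣ)] (χ : G →* Rˣ) :
    ∑ x, (χ x : R) = if χ = 1 then (Fintype.card G : R) else 0 := by
  split_ifs with h
  · simp [h]
  · exact sum_units_coe_eq_zero h

end CharacterSums

section Fourier

variable {G : Type*} [CommGroup G] [Fintype G]

theorem coe_inv_apply_eq_conj (γ : G →* ℂˣ) (x : G) :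
    (((γ x)⁻¹ : ℂˣ) : ℂ) = conj (γ x : ℂ) := by
  have hpow : (γ x : ℂ) ^ Fintype.card G = 1 := by
    rw [← Units.val_pow_eq_pow_val, ← map_pow, pow_card_eq_one, map_one, Units.val_one]
  rw [← inv_eq_conj (norm_eq_one_of_pow_eq_one hpow Fintype.card_ne_zero),
    Units.val_inv_eq_inv_val]

theorem ofReal_two_mul_re_apply (γ : G →* ℂˣ) (x : G) :
    ((2 * (γ x : ℂ).re : ℝ) : ℂ) = γ x + γ⁻¹ x := by
  rw [MonoidHom.inv_apply, coe_inv_apply_eq_conj, add_conj]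

def charCoeff (v : G → ℂ) (γ : G →* ℂˣ) : ℂ :=
  ∑ x, (((γ x)⁻¹ : ℂˣ) : ℂ) * v x

theorem fhat_smul {l : ℕ} (v : G → ℂ) (a : EuclideanSpace ℂ (Fin l)) (γ : G →* ℂˣ) :
    fhat (fun x => v x • a) γ = charCoeff v γ • a := by
  simp only [fhat, charCoeff, smul_smul, Finset.sum_smul]

theorem charCoeff_one (v : G → ℂ) : charCoeff v 1 = ∑ x, v x := by
  simp [charCoeff]

theorem charCoeff_add (v w : G → ℂ) (γ : G →* ℂˣ) :
    charCoeff (v + w) γ = charCoeff v γ + charCoeff w γ := by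
  simp only [charCoeff, Pi.add_apply, mul_add, Finset.sum_add_distrib]

theorem charCoeff_inv_ofReal (v : G → ℝ) (γ : G →* ℂˣ) :
    charCoeff (fun x => (v x : ℂ)) γ⁻¹ = conj (charCoeff (fun x => (v x : ℂ)) γ) := by
  simp only [charCoeff, map_sum, map_mul, conj_ofReal, coe_inv_apply_eq_conj, conj_conj,
    MonoidHom.inv_apply, inv_inv]

theorem charCoeff_char [DecidableEq (G →* ℂˣ)] (χ γ : G →* ℂˣ) :
    charCoeff (fun x => (χ x : ℂ)) γ = if γ = χ then (Fintype.card G : ℂ) else 0 := by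
  simpa only [charCoeff, inv_mul_eq_one (G := G →* ℂˣ), MonoidHom.mul_apply, MonoidHom.inv_apply,
    Units.val_mul] using sum_units_coe (γ⁻¹ * χ)

theorem sum_apply_eq_zero_of_ne_one [Fintype (G →* ℂˣ)] {z : G} (hz : z ≠ 1) :
    ∑ γ : G →* ℂˣ, (γ z : ℂ) = 0 := by
  obtain ⟨φ, hφ⟩ := CommGroup.exists_apply_ne_one_of_hasEnoughRootsOfUnity G ℂ hz
  exact sum_units_coe_eq_zero (χ := MonoidHom.eval z) fun h =>
    hφ (DFunLike.congr_fun h φ)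

theorem sum_mul_charCoeff [Fintype (G →* ℂˣ)] (v : G → ℂ) (y : G) :
    ∑ γ : G →* ℂˣ, (γ y : ℂ) * charCoeff v γ = Fintype.card (G →* ℂˣ) * v y := by
  classical
  calc ∑ γ : G →* ℂˣ, (γ y : ℂ) * charCoeff v γ
      = ∑ x, (∑ γ : G →* ℂˣ, (γ (y * x⁻¹) : ℂ)) * v x := by
        simp only [charCoeff, Finset.mul_sum, Finset.sum_mul, map_mul, map_inv, Units.val_mul,
          mul_assoc]
        exact Finset.sum_comm
    _ = ∑ x, if x = y then (Fintype.card (G →* ℂˣ) : ℂ) * v x else 0 := by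
        refine Finset.sum_congr rfl fun x _ => ?_
        split_ifs with hxy
        · simp [hxy]
        · rw [sum_apply_eq_zero_of_ne_one (mul_inv_eq_one.not.mpr (Ne.symm hxy)), zero_mul]
    _ = Fintype.card (G →* ℂˣ) * v y := by
        rw [Finset.sum_ite_eq', if_pos (Finset.mem_univ y)]

theorem eq_zero_of_charCoeff_eq_zero (v : G → ℂ) (h : ∀ γ, charCoeff v γ = 0) : v = 0 := by
  have := Fintype.ofFinite (G →* ℂˣ)
  funext y
  have hy := sum_mul_charCoeff v y
  simp only [h, mul_zero, Finset.sum_const_zero] at hy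
  exact (mul_eq_zero.mp hy.symm).resolve_left (Nat.cast_ne_zero.mpr Fintype.card_ne_zero)

end Fourier

section FirstStructural

variable {G : Type*} [CommGroup G] [Fintype G] {l : ℕ}
  {Wγ : (G →* ℂˣ) → Submodule ℂ (EuclideanSpace ℂ (Fin l))}

theorem sum_two_mul_re_apply_eq_zero {γ : G →* ℂˣ} (hγ : γ ≠ 1) :
    ∑ x, 2 * (γ x : ℂ).re = 0 := by
  rw [← Finset.mul_sum, ← re_sum, sum_units_coe_eq_zero hγ, zero_re, mul_zero]

theorem memWChar_two_mul_re_smul {γ₀ : G →* ℂˣ} (hγ₀ : γ₀ ≠ 1)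
    {u : EuclideanSpace ℂ (Fin l)} (hu : u ∈ Wγ γ₀ ⊓ Wγ γ₀⁻¹) :
    MemWChar Wγ (fun x => ((2 * (γ₀ x : ℂ).re : ℝ) : ℂ) • u) := by
  classical
  refine ⟨?_, fun γ hγ => ?_⟩
  · rw [← Finset.sum_smul, ← ofReal_sum, sum_two_mul_re_apply_eq_zero hγ₀,
      Complex.ofReal_zero, zero_smul]
  have hv : (fun x => ((2 * (γ₀ x : ℂ).re : ℝ) : ℂ)) =
      (fun x => (γ₀ x : ℂ)) + fun x => ((γ₀⁻¹ x : ℂˣ) : ℂ) :=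
    funext (ofReal_two_mul_re_apply γ₀)
  rw [fhat_smul, hv, charCoeff_add, charCoeff_char, charCoeff_char]
  by_cases h₁ : γ = γ₀
  · subst h₁
    exact Submodule.smul_mem _ _ (Submodule.mem_inf.mp hu).1
  by_cases h₂ : γ = γ₀⁻¹
  · subst h₂
    exact Submodule.smul_mem _ _ (Submodule.mem_inf.mp hu).2
  simp only [h₁, h₂, if_false, add_zero, zero_smul, Submodule.zero_mem]

theorem charCoeff_eq_zero_of_inf_eq_bot {v : G → ℝ} {a : EuclideanSpace ℂ (Fin l)}
    (hmem : MemWChar Wγ (fun x => (v x : ℂ) • a)) (ha : a ≠ 0) {γ : G →* ℂˣ} (hγ : γ ≠ 1)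
    (hW : Wγ γ ⊓ Wγ γ⁻¹ = ⊥) : charCoeff (fun x => (v x : ℂ)) γ = 0 := by
  by_contra hc
  have h₁ := hmem.2 γ hγ
  have h₂ := hmem.2 γ⁻¹ ((inv_ne_one (α := G →* ℂˣ)).mpr hγ)
  rw [fhat_smul, Submodule.smul_mem_iff _ hc] at h₁
  rw [fhat_smul, charCoeff_inv_ofReal,
    Submodule.smul_mem_iff _ ((map_ne_zero _).mpr hc)] at h₂
  exact ha <| (Submodule.mem_bot ℂ).mp <| hW ▸ Submodule.mem_inf.mpr ⟨h₁, h₂⟩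

end FirstStructural

theorem first_structural_iff_antisymmetric_general (G : Type*) [CommGroup G] [Fintype G] (l : ℕ)
    (Wγ : (G →* ℂˣ) → Submodule ℂ (EuclideanSpace ℂ (Fin l))) :
    (∀ (v : G → ℝ) (a : EuclideanSpace ℂ (Fin l)), (∑ x : G, v x = 0) →
        MemWChar Wγ (fun x => (v x : ℂ) • a) → (fun x : G => (v x : ℂ) • a) = 0) ↔
      (∀ γ : G →* ℂˣ, γ ≠ 1 → Wγ γ ⊓ Wγ γ⁻¹ = ⊥) := by
  constructor
  · intro h γ₀ hγ₀
    refine (Submodule.eq_bot_iff _).mpr fun u hu => ?_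
    have h₁ := congrFun (h _ u (sum_two_mul_re_apply_eq_zero hγ₀)
      (memWChar_two_mul_re_smul hγ₀ hu)) 1
    simpa using h₁
  · intro h v a hv hmem
    by_cases ha : a = 0
    · subst ha
      exact funext fun _ => smul_zero _
    have hv₀ : (fun x => (v x : ℂ)) = 0 := eq_zero_of_charCoeff_eq_zero _ fun γ => by
      by_cases hγ : γ = 1
      · rw [hγ, charCoeff_one, ← ofReal_sum, hv, Complex.ofReal_zero]
      · exact charCoeff_eq_zero_of_inf_eq_bot hmem ha hγ (h γ hγ)
    funext x
    simp [congrFun hv₀ x]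

/-- **The first structural condition for translation-invariant `W`.** The space `W`
determined by the subspaces `(W_γ)` contains no nonzero function `v ⊗ a` with `v`
real-valued of zero mean and `a ∈ ℂ^ℓ` if and only if `W_γ ∩ W_{γ⁻¹} = {0}` for every
nontrivial character `γ`. -/
theorem first_structural_iff_antisymmetric (G : Type*) [CommGroup G] [Fintype G]
    (m l : ℕ) (hm : 3 ≤ m) (hl : 1 ≤ l) (hcard : Fintype.card G = m)
    (Wγ : (G →* ℂˣ) → Submodule ℂ (EuclideanSpace ℂ (Fin l)))
    (hWγ : ∀ γ : G →* ℂˣ, γ ≠ 1 → ∀ u ∈ Wγ γ, ∃ f, MemWChar Wγ f ∧ fhat f γ = u) :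
    (∀ (v : G → ℝ) (a : EuclideanSpace ℂ (Fin l)), (∑ x : G, v x = 0) →
        MemWChar Wγ (fun x => (v x : ℂ) • a) → (fun x : G => (v x : ℂ) • a) = 0) ↔
      (∀ γ : G →* ℂˣ, γ ≠ 1 → Wγ γ ⊓ Wγ γ⁻¹ = ⊥) :=
  first_structural_iff_antisymmetric_general G l Wγ
end
end

section
/- Let W be the translation-invariant subspace determined by the subspaces (W_γ)_{γ ∈ Ĝ∖{1}}. Then W satisfies the second structural condition (i.e., W contains no nonzero function of the form v⊗a with v : G → ℝ real-valued, Σ_x v(x) = 0, v taking one common value on m−1 elements of G, and a ∈ ℂ^ℓ) if and only if ⋂_{γ ∈ Ĝ∖{1}} W_γ = {0}. -/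
open ENNReal NNReal

noncomputable section

open MartingaleModel

/-!
If `w : G → ℂ` equals `c` off a single point `x₀`, then for a nontrivial character `γ`
the sum `∑ₓ γ(x)⁻¹ c` vanishes, so `(w ⊗ a)^(γ) = (w x₀ - c) γ(x₀)⁻¹ • a`. Hence, when `w` is
not constant, `w ⊗ a ∈ W` exactly when `a ∈ ⋂_{γ ≠ 1} W_γ`; and a constant `w` of zero mean
vanishes. Both directions of the equivalence follow, using `w = m δ_{x₀} - 1` for the forward one.
-/

namespace MartingaleModel

variable {G : Type*} [CommGroup G] [Fintype G] {l : ℕ}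

theorem sum_inv_char_eq_zero {γ : G →* ℂˣ} (hγ : γ ≠ 1) :
    ∑ x : G, (((γ x)⁻¹ : ℂˣ) : ℂ) = 0 := by
  have hne : (Units.coeHom ℂ).comp γ⁻¹ ≠ 1 := fun h =>
    hγ <| inv_eq_one.mp <| MonoidHom.ext fun x => Units.ext (DFunLike.congr_fun h x)
  exact sum_hom_units_eq_zero _ hne

theorem fhat_smul_const (w : G → ℂ) (a : EuclideanSpace ℂ (Fin l)) (γ : G →* ℂˣ) :
    fhat (fun x => w x • a) γ = (∑ x : G, (((γ x)⁻¹ : ℂˣ) : ℂ) * w x) • a := by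
  simp only [fhat, Finset.sum_smul, smul_smul]

theorem sum_inv_char_mul_eq_of_eq_off {γ : G →* ℂˣ} (hγ : γ ≠ 1) {w : G → ℂ} {x₀ : G}
    {c : ℂ} (hw : ∀ x, x ≠ x₀ → w x = c) :
    ∑ x : G, (((γ x)⁻¹ : ℂˣ) : ℂ) * w x = (w x₀ - c) * (((γ x₀)⁻¹ : ℂˣ) : ℂ) := by
  classical
  have hsplit : ∀ x, (((γ x)⁻¹ : ℂˣ) : ℂ) * w x =
      c * (((γ x)⁻¹ : ℂˣ) : ℂ) + if x = x₀ then (w x₀ - c) * (((γ x₀)⁻¹ : ℂˣ) : ℂ) else 0 := by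
    intro x
    by_cases hx : x = x₀
    · subst hx; simp only [if_true]; ring
    · simp only [hx, if_false, hw x hx]; ring
  rw [Finset.sum_congr rfl fun x _ => hsplit x, Finset.sum_add_distrib, ← Finset.mul_sum,
    sum_inv_char_eq_zero hγ, mul_zero, zero_add, Finset.sum_ite_eq' Finset.univ x₀,
    if_pos (Finset.mem_univ x₀)]

theorem memWChar_smul_iff_mem_iInf (Wγ : (G →* ℂˣ) → Submodule ℂ (EuclideanSpace ℂ (Fin l)))
    {w : G → ℂ} (a : EuclideanSpace ℂ (Fin l)) {x₀ : G} {c : ℂ} (hsum : ∑ x : G, w x = 0)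
    (hw : ∀ x, x ≠ x₀ → w x = c) (hx₀ : w x₀ ≠ c) :
    MemWChar Wγ (fun x => w x • a) ↔ a ∈ ⨅ (γ : G →* ℂˣ) (_ : γ ≠ 1), Wγ γ := by
  have hmean : ∑ x : G, w x • a = 0 := by rw [← Finset.sum_smul, hsum, zero_smul]
  simp only [MemWChar, hmean, true_and, Submodule.mem_iInf]
  refine forall₂_congr fun γ hγ => ?_
  rw [fhat_smul_const, sum_inv_char_mul_eq_of_eq_off hγ hw]
  exact Submodule.smul_mem_iff _ (mul_ne_zero (sub_ne_zero.mpr hx₀) (Units.ne_zero _))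

end MartingaleModel

theorem eq_zero_of_sum_eq_zero_of_forall_eq {G : Type*} [Fintype G] [Nonempty G] {v : G → ℝ}
    {c : ℝ} (hsum : ∑ x : G, v x = 0) (hv : ∀ x, v x = c) : v = 0 := by
  have hc : (Fintype.card G : ℝ) * c = 0 := by
    simpa only [hv, Finset.sum_const, Finset.card_univ, nsmul_eq_mul] using hsum
  funext x
  rw [hv, Pi.zero_apply]
  exact (mul_eq_zero.mp hc).resolve_left (Nat.cast_ne_zero.mpr Fintype.card_ne_zero)

theorem second_structural_iff_cancelling_general (G : Type*) [CommGroup G] [Fintype G]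
    (m l : ℕ) (hm : 3 ≤ m) (hcard : Fintype.card G = m)
    (Wγ : (G →* ℂˣ) → Submodule ℂ (EuclideanSpace ℂ (Fin l))) :
    (∀ (v : G → ℝ) (a : EuclideanSpace ℂ (Fin l)), (∑ x : G, v x = 0) →
        (∃ x₀ c, ∀ x : G, x ≠ x₀ → v x = c) →
        MemWChar Wγ (fun x => (v x : ℂ) • a) → (fun x : G => (v x : ℂ) • a) = 0) ↔
      (⨅ (γ : G →* ℂˣ) (_ : γ ≠ 1), Wγ γ) = ⊥ := by
  classical
  obtain ⟨x₀⟩ : Nonempty G := Fintype.card_pos_iff.mp (by omega)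
  constructor
  · intro H
    refine (Submodule.eq_bot_iff _).mpr fun a ha => ?_
    let v : G → ℝ := fun x => (if x = x₀ then (m : ℝ) else 0) - 1
    have hsum : ∑ x : G, v x = 0 := by simp [v, Finset.sum_sub_distrib, hcard]
    have hoff : ∀ x, x ≠ x₀ → v x = -1 := fun x hx => by simp [v, hx]
    have hm' : (3 : ℝ) ≤ m := by exact_mod_cast hm
    have hvx₀_eq : v x₀ = m - 1 := by simp [v]
    have hx₀ : v x₀ ≠ -1 := by linarith
    have hvx₀ : v x₀ ≠ 0 := by linarith
    have hmem := (memWChar_smul_iff_mem_iInf Wγ a (w := fun x => (v x : ℂ)) (c := ((-1 : ℝ) : ℂ))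
      (by exact_mod_cast hsum) (fun x hx => by rw [hoff x hx]) (by exact_mod_cast hx₀)).mpr ha
    exact (smul_eq_zero.mp (congrFun (H v a hsum ⟨x₀, -1, hoff⟩ hmem) x₀)).resolve_left
      (by exact_mod_cast hvx₀)
  · rintro H v a hsum ⟨x₁, c, hv⟩ hmem
    by_cases hconst : v x₁ = c
    · have hv0 := eq_zero_of_sum_eq_zero_of_forall_eq hsum fun x =>
        if hx : x = x₁ then hx ▸ hconst else hv x hx
      funext x
      simp [hv0]
    · have ha := (memWChar_smul_iff_mem_iInf Wγ a (w := fun x => (v x : ℂ)) (c := (c : ℂ))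
        (by exact_mod_cast hsum) (fun x hx => by rw [hv x hx]) (by exact_mod_cast hconst)).mp hmem
      rw [H, Submodule.mem_bot] at ha
      funext x
      simp [ha]

/-- **The second structural condition for translation-invariant `W`.** The space `W`
determined by the subspaces `(W_γ)` contains no nonzero function `v ⊗ a` with `v`
real-valued of zero mean taking one common value on `m-1` elements of `G`, and
`a ∈ ℂ^ℓ`, if and only if `⋂_{γ ≠ 1} W_γ = {0}`. -/
theorem second_structural_iff_cancelling (G : Type*) [CommGroup G] [Fintype G]
    (m l : ℕ) (hm : 3 ≤ m) (hl : 1 ≤ l) (hcard : Fintype.card G = m)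
    (Wγ : (G →* ℂˣ) → Submodule ℂ (EuclideanSpace ℂ (Fin l)))
    (hWγ : ∀ γ : G →* ℂˣ, γ ≠ 1 → ∀ u ∈ Wγ γ, ∃ f, MemWChar Wγ f ∧ fhat f γ = u) :
    (∀ (v : G → ℝ) (a : EuclideanSpace ℂ (Fin l)), (∑ x : G, v x = 0) →
        (∃ x₀ c, ∀ x : G, x ≠ x₀ → v x = c) →
        MemWChar Wγ (fun x => (v x : ℂ) • a) → (fun x : G => (v x : ℂ) • a) = 0) ↔
      (⨅ (γ : G →* ℂˣ) (_ : γ ≠ 1), Wγ γ) = ⊥ :=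
  second_structural_iff_cancelling_general G m l hm hcard Wγ
end
end

section
/- Linear-algebraic compactness lemma: let p ∈ (1,∞) be fixed. For every δ > 0 there exists ε₀ > 0 such that for every ε ∈ (0,ε₀) and all vectors a, b_0, b_1, …, b_{m−1} in ℝ^ℓ satisfying (b_0,…,b_{m−1}) ∈ W and (1/m)·Σ_{j=0}^{m−1} ‖a+b_j‖ − ‖a‖ ≤ ε·‖a‖, one has ((1/m)·Σ_{j=0}^{m−1} ‖a+b_j‖^p)^{1/p} ≤ e^{κ(1/p)+δ}·‖a‖, where ‖·‖ is the Euclidean norm on ℝ^ℓ. -/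
open ENNReal NNReal

noncomputable section

open MartingaleModel

/-! On the compact set of pairs `(a, b)` with `‖a‖ = 1`, `b ∈ W` and `b` bounded, the defect
`(1/m) ∑ ‖a + b j‖ - 1` is nonnegative, and it vanishes exactly when the triangle inequality for
`∑ (a + b j) = m • a` is an equality. By strict convexity every `a + b j` is then a nonnegative
multiple `(1 + v j) • a`, so `b = v ⊗ a`, `v` is admissible for `κ`, and the `p`-mean of the
`‖a + b j‖` is at most `exp (κ (1/p))`. Compactness turns this into a uniform statement: a small
defect forces the `p`-mean below `exp (κ (1/p) + δ)`. Homogeneity removes the normalisation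
`‖a‖ = 1`. -/

open Finset

theorem Real.rpow_le_exp_of_mul_log_le {x y c : ℝ} (hx : 0 ≤ x) (h : y * Real.log x ≤ c) :
    x ^ y ≤ Real.exp c := by
  rcases hx.eq_or_lt with rfl | hx
  · simp only [Real.log_zero, mul_zero] at h
    exact (Real.zero_rpow_le_one y).trans (Real.one_le_exp h)
  · rw [Real.rpow_def_of_pos hx, mul_comm]
    exact Real.exp_le_exp.2 h

theorem rpow_mean_mul {ι : Type*} (s : Finset ι) {c p t : ℝ} (hc : 0 ≤ c)
    (hp : p ≠ 0) (ht : 0 ≤ t) {y : ι → ℝ} (hy : ∀ j, 0 ≤ y j) :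
    (c * ∑ j ∈ s, (t * y j) ^ p) ^ (1 / p) = t * (c * ∑ j ∈ s, y j ^ p) ^ (1 / p) := by
  simp_rw [Real.mul_rpow ht (hy _), ← mul_sum, mul_left_comm c]
  have hmean : 0 ≤ c * ∑ j ∈ s, y j ^ p :=
    mul_nonneg hc (sum_nonneg fun j _ => Real.rpow_nonneg (hy j) p)
  rw [Real.mul_rpow (by positivity) hmean, ← Real.rpow_mul ht, mul_one_div_cancel hp,
    Real.rpow_one]

theorem Fin.sum_le_mul_of_mean_le {m : ℕ} {f : Fin m → ℝ} {c : ℝ} (h : (1 / m) * ∑ j, f j ≤ c) :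
    ∑ j, f j ≤ m * c := by
  rcases m.eq_zero_or_pos with rfl | hm
  · simp
  · rwa [one_div, inv_mul_le_iff₀ (Nat.cast_pos.2 hm)] at h

section NormedSpace

variable {E : Type*} [NormedAddCommGroup E] [NormedSpace ℝ E]

theorem sameRay_sum_of_sum_norm_le [StrictConvexSpace ℝ E] {ι : Type*} [DecidableEq ι]
    {s : Finset ι} {x : ι → E} (h : ∑ j ∈ s, ‖x j‖ ≤ ‖∑ j ∈ s, x j‖) {i : ι} (hi : i ∈ s) :
    SameRay ℝ (x i) (∑ j ∈ s, x j) := by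
  rw [← add_sum_erase s x hi] at h ⊢
  rw [← add_sum_erase s (‖x ·‖) hi] at h
  have hrest : ‖∑ j ∈ s.erase i, x j‖ ≤ ∑ j ∈ s.erase i, ‖x j‖ := norm_sum_le _ _
  have hadd : ‖x i + ∑ j ∈ s.erase i, x j‖ = ‖x i‖ + ‖∑ j ∈ s.erase i, x j‖ :=
    le_antisymm (norm_add_le _ _) (by linarith)
  exact SameRay.rfl.add_right (sameRay_iff_norm_add.2 hadd)

variable {m : ℕ}

omit [NormedSpace ℝ E] in
theorem norm_le_of_mean_norm_add_le {a : E} {b : Fin m → E} {R : ℝ}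
    (h : (1 / m) * ∑ j, ‖a + b j‖ ≤ R) : ‖b‖ ≤ m * R + ‖a‖ := by
  have hR : 0 ≤ R := le_trans (by positivity) h
  refine (pi_norm_le_iff_of_nonneg (by positivity)).2 fun j => ?_
  calc ‖b j‖ ≤ ‖a + b j‖ + ‖a‖ := by simpa using norm_sub_le (a + b j) a
    _ ≤ ∑ k, ‖a + b k‖ + ‖a‖ := by
      gcongr
      exact single_le_sum (f := fun k => ‖a + b k‖) (fun k _ => norm_nonneg _) (mem_univ j)
    _ ≤ m * R + ‖a‖ := by gcongr; exact Fin.sum_le_mul_of_mean_le h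

theorem rpow_mean_norm_le_mul_norm_of_norm_eq_one {S : Submodule ℝ (Fin m → E)} {p ε C : ℝ}
    (hp : 0 < p)
    (h : ∀ (a : E) (b : Fin m → E), ‖a‖ = 1 → b ∈ S → (1 / m) * ∑ j, ‖a + b j‖ - 1 ≤ ε →
      ((1 / m) * ∑ j, ‖a + b j‖ ^ p) ^ (1 / p) ≤ C)
    {a : E} {b : Fin m → E} (hb : b ∈ S) (hab : (1 / m) * ∑ j, ‖a + b j‖ - ‖a‖ ≤ ε * ‖a‖) :
    ((1 / m) * ∑ j, ‖a + b j‖ ^ p) ^ (1 / p) ≤ C * ‖a‖ := by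
  rcases eq_or_ne a 0 with rfl | ha
  · simp only [zero_add, norm_zero, sub_zero, mul_zero] at hab ⊢
    have hmean : (1 / m : ℝ) * ∑ j, ‖b j‖ = 0 := le_antisymm hab (by positivity)
    have hpmean : (1 / m : ℝ) * ∑ j, ‖b j‖ ^ p = 0 := by
      rcases mul_eq_zero.1 hmean with hm | hsum
      · rw [hm, zero_mul]
      · rw [sum_eq_zero_iff_of_nonneg (fun j _ => norm_nonneg _)] at hsum
        simp [hsum, Real.zero_rpow hp.ne']
    rw [hpmean, Real.zero_rpow (one_div_pos.2 hp).ne']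
  · set t := ‖a‖⁻¹
    have hna : ‖a‖ ≠ 0 := norm_ne_zero_iff.2 ha
    have ht : 0 < t := inv_pos.2 (norm_pos_iff.2 ha)
    have hscale : ∀ j, ‖t • a + (t • b) j‖ = t * ‖a + b j‖ := fun j => by
      rw [Pi.smul_apply, ← smul_add, norm_smul, Real.norm_of_nonneg ht.le]
    have hdefect : (1 / m) * ∑ j, ‖t • a + (t • b) j‖ - 1 ≤ ε := by
      simp_rw [hscale, ← mul_sum]
      calc (1 / m) * (t * ∑ j, ‖a + b j‖) - 1
          = t * ((1 / m) * ∑ j, ‖a + b j‖ - ‖a‖) := by rw [mul_sub, inv_mul_cancel₀ hna]; ring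
        _ ≤ t * (ε * ‖a‖) := by gcongr
        _ = ε := by rw [mul_comm ε, inv_mul_cancel_left₀ hna]
    have hnormed := h (t • a) (t • b) (norm_smul_inv_norm ha) (S.smul_mem t hb) hdefect
    simp_rw [hscale] at hnormed
    rw [rpow_mean_mul _ (by positivity) hp.ne' ht.le (fun _ => norm_nonneg _)] at hnormed
    calc _ = ‖a‖ * (t * ((1 / m) * ∑ j, ‖a + b j‖ ^ p) ^ (1 / p)) := by
          rw [← mul_assoc, mul_inv_cancel₀ hna, one_mul]
      _ ≤ C * ‖a‖ := by rw [mul_comm C]; gcongr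

end NormedSpace

theorem IsCompact.exists_pos_forall_lt_of_le_zero {X : Type*} [TopologicalSpace X] {K : Set X}
    (hK : IsCompact K) {f g : X → ℝ} (hf : Continuous f) (hg : Continuous g) {c : ℝ}
    (h : ∀ x ∈ K, f x ≤ 0 → g x < c) : ∃ ε > 0, ∀ x ∈ K, f x < ε → g x < c := by
  rcases (K ∩ {x | c ≤ g x}).eq_empty_or_nonempty with hT | hT
  · exact ⟨1, one_pos, fun x hx _ => not_le.1 fun hcx => hT.subset ⟨hx, hcx⟩⟩
  · obtain ⟨x₀, ⟨hx₀K, hx₀g⟩, hmin⟩ :=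
      (hK.inter_right (isClosed_le continuous_const hg)).exists_isMinOn hT hf.continuousOn
    exact ⟨f x₀, not_le.1 fun h0 => (h x₀ hx₀K h0).not_ge hx₀g,
      fun x hx hfx => not_le.1 fun hcx => (hmin ⟨hx, hcx⟩).not_gt hfx⟩

namespace MartingaleModel

variable {m l : ℕ} {W : Submodule ℝ (Fin m → EuclideanSpace ℝ (Fin l))}

theorem abs_one_add_le_of_mem_kappaSet {v : Fin m → ℝ} (hv : v ∈ kappaSet m l W) (j : Fin m) :
    |1 + v j| ≤ m := by
  obtain ⟨hsum, hge, -⟩ := hv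
  have htotal : ∑ k, (1 + v k) = m := by simp [sum_add_distrib, hsum]
  rw [abs_of_nonneg (by linarith [hge j]), ← htotal]
  exact single_le_sum (f := fun k => 1 + v k) (fun k _ => by linarith [hge k]) (mem_univ j)

theorem le_kappa {θ : ℝ} (hθ : 0 < θ) {v : Fin m → ℝ} (hv : v ∈ kappaSet m l W) :
    θ * Real.log ((1 / m) * ∑ j, |1 + v j| ^ (1 / θ)) ≤ kappa m l W θ := by
  rw [kappa, if_neg hθ.ne']
  refine le_csSup ⟨θ * (m * (m : ℝ) ^ (1 / θ)), ?_⟩ ⟨v, hv, rfl⟩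
  rintro _ ⟨w, hw, rfl⟩
  have hsum : 0 ≤ ∑ j, |1 + w j| ^ (1 / θ) := by positivity
  calc θ * Real.log ((1 / m) * ∑ j, |1 + w j| ^ (1 / θ))
      ≤ θ * ((1 / m) * ∑ j, |1 + w j| ^ (1 / θ)) := by
        gcongr
        exact Real.log_le_self (by positivity)
    _ ≤ θ * ∑ j, |1 + w j| ^ (1 / θ) := by
        gcongr
        exact mul_le_of_le_one_left hsum (by simpa using Nat.cast_inv_le_one m)
    _ ≤ θ * ∑ _j : Fin m, (m : ℝ) ^ (1 / θ) := by
        gcongr with j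
        exact abs_one_add_le_of_mem_kappaSet hw j
    _ = θ * (m * (m : ℝ) ^ (1 / θ)) := by simp

theorem exists_mem_kappaSet_of_sum_norm_le (hWV : ∀ b ∈ W, ∑ j, b j = 0)
    {a : EuclideanSpace ℝ (Fin l)} {b : Fin m → EuclideanSpace ℝ (Fin l)} (ha : ‖a‖ = 1)
    (hb : b ∈ W) (h : ∑ j, ‖a + b j‖ ≤ m) :
    ∃ v ∈ kappaSet m l W, ∀ j, ‖a + b j‖ = 1 + v j := by
  have hsum : ∑ j, (a + b j) = (m : ℝ) • a := by
    rw [sum_add_distrib, hWV b hb, add_zero, sum_const, card_univ, Fintype.card_fin,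
      Nat.cast_smul_eq_nsmul]
  have hnorm_sum : ‖∑ j, (a + b j)‖ = m := by
    rw [hsum, norm_smul, ha, mul_one, Real.norm_natCast]
  have heq : ∑ j, ‖a + b j‖ = m := le_antisymm h (hnorm_sum ▸ norm_sum_le _ _)
  have hray : ∀ j, a + b j = ‖a + b j‖ • a := fun j => by
    have hm : (0 : ℝ) < m := Nat.cast_pos.2 j.pos
    have hj := sameRay_sum_of_sum_norm_le (hnorm_sum ▸ h) (mem_univ j)
    rw [hsum] at hj
    have hja := hj.pos_smul_right (inv_pos.2 hm)
    rw [inv_smul_smul₀ hm.ne'] at hja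
    rw [hja.norm_smul_eq, ha, one_smul]
  refine ⟨fun j => ‖a + b j‖ - 1, ⟨?_, fun j => by simp, a, ?_, ?_⟩, fun j => by ring⟩
  · simp [sum_sub_distrib, heq]
  · rintro rfl
    simp at ha
  · convert hb using 1
    ext1 j
    rw [sub_smul, one_smul, ← hray, add_sub_cancel_left]

theorem rpow_mean_le_exp_kappa_of_sum_norm_le (hWV : ∀ b ∈ W, ∑ j, b j = 0) {p : ℝ}
    (hp : 0 < p) {a : EuclideanSpace ℝ (Fin l)} {b : Fin m → EuclideanSpace ℝ (Fin l)}
    (ha : ‖a‖ = 1) (hb : b ∈ W) (h : ∑ j, ‖a + b j‖ ≤ m) :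
    ((1 / m) * ∑ j, ‖a + b j‖ ^ p) ^ (1 / p) ≤ Real.exp (kappa m l W (1 / p)) := by
  obtain ⟨v, hv, hnorm⟩ := exists_mem_kappaSet_of_sum_norm_le hWV ha hb h
  have habs : ∀ j, |1 + v j| = ‖a + b j‖ := fun j => by rw [← hnorm j, abs_norm]
  have hκ := le_kappa (one_div_pos.2 hp) hv
  simp only [habs, one_div_one_div] at hκ
  exact Real.rpow_le_exp_of_mul_log_le
    (mul_nonneg (by positivity) (sum_nonneg fun j _ => Real.rpow_nonneg (norm_nonneg _) p)) hκ

theorem exists_pos_rpow_mean_lt_of_defect_lt (hWV : ∀ b ∈ W, ∑ j, b j = 0) {p c : ℝ}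
    (hp : 0 < p) (hc : Real.exp (kappa m l W (1 / p)) < c) (R : ℝ) :
    ∃ ε > 0, ∀ (a : EuclideanSpace ℝ (Fin l)) (b : Fin m → EuclideanSpace ℝ (Fin l)),
      ‖a‖ = 1 → b ∈ W → ‖b‖ ≤ R → (1 / m) * ∑ j, ‖a + b j‖ - 1 < ε →
        ((1 / m) * ∑ j, ‖a + b j‖ ^ p) ^ (1 / p) < c := by
  have hK : IsCompact (Metric.sphere (0 : EuclideanSpace ℝ (Fin l)) 1 ×ˢ
      ((W : Set (Fin m → EuclideanSpace ℝ (Fin l))) ∩ Metric.closedBall 0 R)) :=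
    (isCompact_sphere 0 1).prod
      ((isCompact_closedBall 0 R).inter_left (Submodule.closed_of_finiteDimensional W))
  obtain ⟨ε, hε, hsmall⟩ := hK.exists_pos_forall_lt_of_le_zero
    (f := fun x => (1 / m) * ∑ j, ‖x.1 + x.2 j‖ - 1)
    (g := fun x => ((1 / m) * ∑ j, ‖x.1 + x.2 j‖ ^ p) ^ (1 / p))
    (by fun_prop) (by fun_prop (disch := bound)) <| by
      rintro ⟨a, b⟩ ⟨ha, hb, -⟩ hdefect
      have hsum : ∑ j, ‖a + b j‖ ≤ m := by
        simpa using Fin.sum_le_mul_of_mean_le (c := 1) (by linarith)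
      exact (rpow_mean_le_exp_kappa_of_sum_norm_le hWV hp (mem_sphere_zero_iff_norm.1 ha) hb
        hsum).trans_lt hc
  exact ⟨ε, hε, fun a b ha hb hbR hdefect => hsmall (a, b)
    ⟨mem_sphere_zero_iff_norm.2 ha, hb, mem_closedBall_zero_iff.2 hbR⟩ hdefect⟩

end MartingaleModel

theorem linear_algebraic_lemma_general (m l : ℕ)
    (W : Submodule ℝ (Fin m → EuclideanSpace ℝ (Fin l)))
    (hWV : ∀ b ∈ W, ∑ j : Fin m, b j = 0)
    (p : ℝ) (hp : 1 < p) (δ : ℝ) (hδ : 0 < δ) :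
    ∃ ε₀ > (0 : ℝ), ∀ ε : ℝ, 0 < ε → ε < ε₀ →
      ∀ (a : EuclideanSpace ℝ (Fin l)) (b : Fin m → EuclideanSpace ℝ (Fin l)),
        b ∈ W →
        (1 / m) * (∑ j : Fin m, ‖a + b j‖) - ‖a‖ ≤ ε * ‖a‖ →
        ((1 / m) * ∑ j : Fin m, ‖a + b j‖ ^ p) ^ (1 / p) ≤
          Real.exp (kappa m l W (1 / p) + δ) * ‖a‖ := by
  have hp0 : 0 < p := by linarith
  obtain ⟨ε₁, hε₁, hsmall⟩ := exists_pos_rpow_mean_lt_of_defect_lt hWV hp0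
    (Real.exp_lt_exp.2 (lt_add_of_pos_right _ hδ)) (2 * m + 1)
  refine ⟨min ε₁ 1, by positivity, fun ε _ hε _ _ hbW hab =>
    rpow_mean_norm_le_mul_norm_of_norm_eq_one hp0 (fun a b ha hb hdefect => ?_) hbW hab⟩
  have hbound : ‖b‖ ≤ 2 * m + 1 := by
    have hε1 : ε ≤ 1 := (hε.trans_le (min_le_right _ _)).le
    have hb2 := norm_le_of_mean_norm_add_le (a := a) (b := b) (R := 2) (by linarith)
    rw [ha] at hb2
    linarith
  exact (hsmall a b ha hb hbound (hdefect.trans_lt (hε.trans_le (min_le_left _ _)))).le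

/-- **Linear-algebraic compactness lemma.** Fix `p ∈ (1,∞)`. For every `δ > 0` there
is `ε₀ > 0` such that for every `ε ∈ (0,ε₀)` and all vectors `a, b_0, …, b_{m-1}` in
`ℝ^ℓ` with `(b_j)_j ∈ W` and `(1/m)·∑_j ‖a+b_j‖ - ‖a‖ ≤ ε‖a‖`, one has
`((1/m)·∑_j ‖a+b_j‖^p)^{1/p} ≤ e^{κ(1/p)+δ}·‖a‖`. -/
theorem linear_algebraic_lemma (m l : ℕ) (hm : 3 ≤ m) (hl : 1 ≤ l)
    (W : Submodule ℝ (Fin m → EuclideanSpace ℝ (Fin l)))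
    (hWV : ∀ b ∈ W, ∑ j : Fin m, b j = 0)
    (p : ℝ) (hp : 1 < p) (δ : ℝ) (hδ : 0 < δ) :
    ∃ ε₀ > (0 : ℝ), ∀ ε : ℝ, 0 < ε → ε < ε₀ →
      ∀ (a : EuclideanSpace ℝ (Fin l)) (b : Fin m → EuclideanSpace ℝ (Fin l)),
        b ∈ W →
        (1 / m) * (∑ j : Fin m, ‖a + b j‖) - ‖a‖ ≤ ε * ‖a‖ →
        ((1 / m) * ∑ j : Fin m, ‖a + b j‖ ^ p) ^ (1 / p) ≤
          Real.exp (kappa m l W (1 / p) + δ) * ‖a‖ :=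
  linear_algebraic_lemma_general m l W hWV p hp δ hδ
end
end

section
/- Let ε > 0, let F be an L_1-bounded ℝ^ℓ-valued martingale adapted to (ℱ_n), and let ω be an ε-convex atom of ℱ_n for F. Then E[‖f_{n+1}‖·1_ω] ≤ ((ε+2)/ε)·E[(‖F_{n+1}‖ − ‖F_n‖)·1_ω]. -/
open MeasureTheory ENNReal NNReal

noncomputable section

open MartingaleModel

namespace MartingaleModel

/-- The atom `ω_w` of `ℱ_n` is `ε`-convex for the martingale `F` if
`E[(‖F_{n+1}‖ - ‖F_n‖)·1_ω] ≥ ε·E[‖F_n‖·1_ω]`; otherwise it is `ε`-flat. -/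
def IsConvexAtom {m l : ℕ} (P : Measure (ℕ → Fin m)) (ε : ℝ)
    (F : ℕ → (ℕ → Fin m) → EuclideanSpace ℝ (Fin l)) (n : ℕ) (w : Fin n → Fin m) : Prop :=
  ε * ∫ x in cyl m n w, ‖F n x‖ ∂P ≤ ∫ x in cyl m n w, (‖F (n + 1) x‖ - ‖F n x‖) ∂P

end MartingaleModel

/-! Integrating the triangle inequality `‖F_{n+1} - F_n‖ ≤ (‖F_{n+1}‖ - ‖F_n‖) + 2‖F_n‖` over the
atom and bounding `2·E[‖F_n‖·1_ω]` by `(2/ε)·E[(‖F_{n+1}‖ - ‖F_n‖)·1_ω]` via convexity gives the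
claim. Integrability holds because an adapted function only sees finitely many coordinates of a
finite alphabet, hence is measurable, and the martingale is `L_1`-bounded. -/

lemma DependsOn.measurable_of_countable {ι : Type*} {α : ι → Type*} {β : Type*}
    [∀ i, MeasurableSpace (α i)] [∀ i, MeasurableSingletonClass (α i)] [∀ i, Countable (α i)]
    [MeasurableSpace β] {f : (Π i, α i) → β} {s : Finset ι} (hf : DependsOn f s) :
    Measurable f := by
  cases isEmpty_or_nonempty (Π i, α i) with
  | inl _ => exact measurable_of_empty f
  | inr hx =>
    have : Nonempty β := hx.map f
    obtain ⟨g, rfl⟩ := dependsOn_iff_exists_comp.1 hf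
    exact (_root_.measurable_of_countable g).comp
      (measurable_pi_lambda _ fun i => measurable_pi_apply _)

lemma MartingaleModel.AdaptedFun.measurable_s12 {m : ℕ} {E : Type*} [MeasurableSpace E]
    {F : ℕ → (ℕ → Fin m) → E} (hF : AdaptedFun m F) (n : ℕ) : Measurable (F n) :=
  DependsOn.measurable_of_countable (s := Finset.range n) fun _ _ h =>
    hF n _ _ fun i hi => h i (by simpa using hi)

section NormSub

variable {Ω E : Type*} [MeasurableSpace Ω] [NormedAddCommGroup E] {μ : Measure Ω}
  {f g : Ω → E}

lemma integral_norm_sub_le_integral_sub_norm_add (hf : Integrable f μ) (hg : Integrable g μ) :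
    ∫ x, ‖f x - g x‖ ∂μ ≤ ∫ x, (‖f x‖ - ‖g x‖) ∂μ + 2 * ∫ x, ‖g x‖ ∂μ := by
  calc ∫ x, ‖f x - g x‖ ∂μ ≤ ∫ x, (‖f x‖ + ‖g x‖) ∂μ :=
        integral_mono (hf.sub hg).norm (hf.norm.add hg.norm) fun x => norm_sub_le _ _
    _ = ∫ x, (‖f x‖ - ‖g x‖) ∂μ + 2 * ∫ x, ‖g x‖ ∂μ := by
        rw [integral_add hf.norm hg.norm, integral_sub hf.norm hg.norm]
        ring

lemma integral_norm_sub_le_of_mul_integral_norm_le (hf : Integrable f μ) (hg : Integrable g μ)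
    {ε : ℝ} (hε : 0 < ε) (h : ε * ∫ x, ‖g x‖ ∂μ ≤ ∫ x, (‖f x‖ - ‖g x‖) ∂μ) :
    ∫ x, ‖f x - g x‖ ∂μ ≤ ((ε + 2) / ε) * ∫ x, (‖f x‖ - ‖g x‖) ∂μ := by
  have h2 : 2 * ∫ x, ‖g x‖ ∂μ ≤ (2 / ε) * ∫ x, (‖f x‖ - ‖g x‖) ∂μ := by
    rw [div_mul_eq_mul_div, le_div_iff₀ hε]
    linarith
  calc ∫ x, ‖f x - g x‖ ∂μ ≤ ∫ x, (‖f x‖ - ‖g x‖) ∂μ + 2 * ∫ x, ‖g x‖ ∂μ :=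
        integral_norm_sub_le_integral_sub_norm_add hf hg
    _ ≤ ((ε + 2) / ε) * ∫ x, (‖f x‖ - ‖g x‖) ∂μ := by
        rw [add_div, add_mul, div_self hε.ne', one_mul]
        linarith

end NormSub

theorem convex_atom_triangle_inequality_general (m l : ℕ)
    (P : Measure (ℕ → Fin m))
    (ε : ℝ) (hε : 0 < ε)
    (F : ℕ → (ℕ → Fin m) → EuclideanSpace ℝ (Fin l)) (hF : IsMartingaleFun m F)
    (hL1 : (⨆ n, eLpNorm (F n) 1 P) < ⊤)
    (n : ℕ) (w : Fin n → Fin m) (hconv : IsConvexAtom P ε F n w) :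
    ∫ x in cyl m n w, ‖F (n + 1) x - F n x‖ ∂P ≤
      ((ε + 2) / ε) * ∫ x in cyl m n w, (‖F (n + 1) x‖ - ‖F n x‖) ∂P := by
  have hInt : ∀ k, Integrable (F k) P := fun k =>
    memLp_one_iff_integrable.1
      ⟨(hF.1.measurable_s12 k).aestronglyMeasurable,
        (le_iSup (fun n => eLpNorm (F n) 1 P) k).trans_lt hL1⟩
  exact integral_norm_sub_le_of_mul_integral_norm_le (hInt (n + 1)).restrict (hInt n).restrict
    hε hconv

/-- **Triangle inequality on convex atoms.** If `ω` is an `ε`-convex atom of `ℱ_n`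
for the `L_1`-bounded martingale `F`, then
`E[‖f_{n+1}‖·1_ω] ≤ ((ε+2)/ε)·E[(‖F_{n+1}‖ - ‖F_n‖)·1_ω]`. -/
theorem convex_atom_triangle_inequality (m l : ℕ) (hm : 3 ≤ m) (hl : 1 ≤ l)
    (P : Measure (ℕ → Fin m)) (hP : IsProbabilityMeasure P)
    (hPcyl : ∀ (n : ℕ) (w : Fin n → Fin m), P (cyl m n w) = ((m : ℝ≥0∞))⁻¹ ^ n)
    (ε : ℝ) (hε : 0 < ε)
    (F : ℕ → (ℕ → Fin m) → EuclideanSpace ℝ (Fin l)) (hF : IsMartingaleFun m F)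
    (hL1 : (⨆ n, eLpNorm (F n) 1 P) < ⊤)
    (n : ℕ) (w : Fin n → Fin m) (hconv : IsConvexAtom P ε F n w) :
    ∫ x in cyl m n w, ‖F (n + 1) x - F n x‖ ∂P ≤
      ((ε + 2) / ε) * ∫ x in cyl m n w, (‖F (n + 1) x‖ - ‖F n x‖) ∂P :=
  convex_atom_triangle_inequality_general m l P ε hε F hF hL1 n w hconv
end
end
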